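/- arXiv:2506.14359 — 5 statements merged into one kernel-verified Lean document; each statement's English description precedes it below -/
import Mathlib

section
/- For every Young diagram λ, the following identity holds in the Laurent polynomial ring ℤ[t1^{±1}, t2^{±1}]: Z_λ + t1·t2·Z̄_λ − (1−t1)(1−t2)·Z_λ·Z̄_λ = Σ_{□∈λ} ( t1^{−ℓ(□)}·t2^{a(□)+1} + t1^{ℓ(□)+1}·t2^{−a(□)} ), where Z_λ = Σ_{(i,j)∈λ} t1^{−i}t2^{−j} and Z̄_λ = Σ_{(i,j)∈λ} t1^{i}t2^{j}. -/
/-!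
STATEMENT 0: For every Young diagram λ, in ℤ[t1^{±1},t2^{±1}]:
Z_λ + t1·t2·Z̄_λ − (1−t1)(1−t2)·Z_λ·Z̄_λ
  = Σ_{□∈λ} ( t1^{−ℓ(□)}·t2^{a(□)+1} + t1^{ℓ(□)+1}·t2^{−a(□)} ).
We model the Laurent polynomial ring ℤ[t1^{±1},t2^{±1}] as the group algebra
`AddMonoidAlgebra ℤ (ℤ × ℤ)`, with `T2 (w1, w2)` the monomial t1^{w1}·t2^{w2}.
-/

open Finset

/-- The Laurent polynomial ring ℤ[t1^{±1}, t2^{±1}]. -/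
abbrev Laurent2 : Type := AddMonoidAlgebra ℤ (ℤ × ℤ)

/-- The monomial t1^{w1}·t2^{w2}. -/
noncomputable def T2 (w : ℤ × ℤ) : Laurent2 := AddMonoidAlgebra.single w 1

/-- Arm length a(□) of a box □ = (i,j) in the Young diagram μ:
the number of boxes (i, j′) ∈ μ with j′ > j. -/
def armLength (μ : YoungDiagram) (c : ℕ × ℕ) : ℕ :=
  (μ.cells.filter fun d => d.1 = c.1 ∧ c.2 < d.2).card

/-- Leg length ℓ(□) of a box □ = (i,j) in the Young diagram μ:
the number of boxes (i′, j) ∈ μ with i′ > i. -/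
def legLength (μ : YoungDiagram) (c : ℕ × ℕ) : ℕ :=
  (μ.cells.filter fun d => d.2 = c.2 ∧ c.1 < d.1).card

/-- Z_λ = Σ_{(i,j)∈λ} t1^{−i}·t2^{−j}. -/
noncomputable def Zof (μ : YoungDiagram) : Laurent2 :=
  ∑ c ∈ μ.cells, T2 (-(c.1 : ℤ), -(c.2 : ℤ))

/-- Z̄_λ = Σ_{(i,j)∈λ} t1^{i}·t2^{j}. -/
noncomputable def Zbarof (μ : YoungDiagram) : Laurent2 :=
  ∑ c ∈ μ.cells, T2 ((c.1 : ℤ), (c.2 : ℤ))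

lemma T2_mul (a b : ℤ × ℤ) : T2 a * T2 b = T2 (a + b) := by
  simp [T2, AddMonoidAlgebra.single_mul_single]

lemma T2_zero : T2 0 = 1 := rfl

lemma telescope (v c : ℤ × ℤ) (n : ℕ) :
    (1 - T2 v) * ∑ j ∈ Finset.range n, T2 (c + j • v) = T2 c - T2 (c + n • v) := by
  induction n with
  | zero => simp [T2_zero]
  | succ n ih =>
    rw [Finset.sum_range_succ, mul_add, ih]
    have h : T2 v * T2 (c + n • v) = T2 (c + (n+1) • v) := by rw [T2_mul]; congr 1; module
    rw [sub_mul, one_mul, h]; ring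

lemma colLen_eq {μ : YoungDiagram} {j n : ℕ} (h : ∀ i, (i,j) ∈ μ ↔ i < n) :
    μ.colLen j = n := by
  refine le_antisymm ?_ ?_
  · by_contra h'
    push_neg at h'
    exact absurd ((h n).1 (YoungDiagram.mem_iff_lt_colLen.2 h')) (lt_irrefl n)
  · cases n with
    | zero => exact Nat.zero_le _
    | succ k => exact YoungDiagram.mem_iff_lt_colLen.1 ((h k).2 (Nat.lt_succ_self k))

lemma rowLen_eq {μ : YoungDiagram} {i n : ℕ} (h : ∀ j, (i,j) ∈ μ ↔ j < n) :
    μ.rowLen i = n := by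
  refine le_antisymm ?_ ?_
  · by_contra h'
    push_neg at h'
    exact absurd ((h n).1 (YoungDiagram.mem_iff_lt_rowLen.2 h')) (lt_irrefl n)
  · cases n with
    | zero => exact Nat.zero_le _
    | succ k => exact YoungDiagram.mem_iff_lt_rowLen.1 ((h k).2 (Nat.lt_succ_self k))

lemma arm_eq {μ : YoungDiagram} {i j : ℕ} (h : (i,j) ∈ μ) :
    armLength μ (i,j) + (j+1) = μ.rowLen i := by
  have hf : μ.cells.filter (fun d => d.1 = i ∧ j < d.2)
      = (Finset.Ico (j+1) (μ.rowLen i)).image (fun k => (i,k)) := by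
    ext d
    obtain ⟨a,b⟩ := d
    simp only [Finset.mem_filter, Finset.mem_image, Finset.mem_Ico, YoungDiagram.mem_cells,
      Prod.mk.injEq]
    constructor
    · rintro ⟨hm, rfl, hj⟩
      exact ⟨b, ⟨hj, YoungDiagram.mem_iff_lt_rowLen.1 hm⟩, rfl, rfl⟩
    · rintro ⟨k, ⟨h1, h2⟩, rfl, rfl⟩
      exact ⟨YoungDiagram.mem_iff_lt_rowLen.2 h2, rfl, h1⟩
  have hcard : armLength μ (i,j) = μ.rowLen i - (j+1) := by
    rw [armLength, hf, Finset.card_image_of_injective _ (by intro a b hab; simpa using hab),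
      Nat.card_Ico]
  have := YoungDiagram.mem_iff_lt_rowLen.1 h
  omega

lemma leg_eq {μ : YoungDiagram} {i j : ℕ} (h : (i,j) ∈ μ) :
    legLength μ (i,j) + (i+1) = μ.colLen j := by
  have hf : μ.cells.filter (fun d => d.2 = j ∧ i < d.1)
      = (Finset.Ico (i+1) (μ.colLen j)).image (fun k => (k,j)) := by
    ext d
    obtain ⟨a,b⟩ := d
    simp only [Finset.mem_filter, Finset.mem_image, Finset.mem_Ico, YoungDiagram.mem_cells,
      Prod.mk.injEq]
    constructor
    · rintro ⟨hm, rfl, hj⟩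
      exact ⟨a, ⟨hj, YoungDiagram.mem_iff_lt_colLen.1 hm⟩, rfl, rfl⟩
    · rintro ⟨k, ⟨h1, h2⟩, rfl, rfl⟩
      exact ⟨YoungDiagram.mem_iff_lt_colLen.2 h2, rfl, h1⟩
  have hcard : legLength μ (i,j) = μ.colLen j - (i+1) := by
    rw [legLength, hf, Finset.card_image_of_injective _ (by intro a b hab; simpa using hab),
      Nat.card_Ico]
  have := YoungDiagram.mem_iff_lt_colLen.1 h
  omega

lemma cell_lt_colLen {μ : YoungDiagram} {c : ℕ × ℕ} (hc : c ∈ μ) : c.1 < μ.colLen 0 :=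
  YoungDiagram.mem_iff_lt_colLen.1 (μ.up_left_mem le_rfl (Nat.zero_le _) hc)

lemma sum_cells (μ : YoungDiagram) (g : ℕ × ℕ → AddMonoidAlgebra ℤ (ℤ × ℤ)) :
    ∑ c ∈ μ.cells, g c
      = ∑ i ∈ range (μ.colLen 0), ∑ j ∈ range (μ.rowLen i), g (i,j) := by
  rw [← Finset.sum_fiberwise_of_maps_to (g := fun c : ℕ × ℕ => c.1)
    (t := range (μ.colLen 0)) (fun c hc => mem_range.2 (cell_lt_colLen (μ.mem_cells c |>.1 hc)))]
  refine Finset.sum_congr rfl fun i _ => ?_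
  have : μ.cells.filter (fun c => c.1 = i) = {i} ×ˢ range (μ.rowLen i) := by
    rw [← YoungDiagram.row_eq_prod]; rfl
  rw [this, Finset.sum_product, Finset.sum_singleton]

def trunc (μ : YoungDiagram) (p : ℕ) : YoungDiagram :=
  ⟨μ.cells.filter (fun c => c.1 < p), by
    intro a b hba ha
    simp only [Finset.coe_filter, Set.mem_setOf_eq, YoungDiagram.mem_cells] at ha ⊢
    exact ⟨μ.isLowerSet hba ha.1, lt_of_le_of_lt hba.1 ha.2⟩⟩

lemma mem_trunc {μ : YoungDiagram} {p : ℕ} {c : ℕ × ℕ} :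
    c ∈ trunc μ p ↔ c ∈ μ ∧ c.1 < p := by
  change c ∈ (trunc μ p).cells ↔ _
  simp [trunc, YoungDiagram.mem_cells]
section TruncFacts
variable {μ : YoungDiagram} {p : ℕ} (hp : μ.colLen 0 = p + 1)

lemma rowLen_trunc (i : ℕ) (hi : i < p) : (trunc μ p).rowLen i = μ.rowLen i := by
  refine rowLen_eq fun j => ?_
  rw [mem_trunc]
  exact ⟨fun h => YoungDiagram.mem_iff_lt_rowLen.1 h.1,
    fun h => ⟨YoungDiagram.mem_iff_lt_rowLen.2 h, hi⟩⟩

include hp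

lemma rowLen_p_pos : 1 ≤ μ.rowLen p := by
  have : (p, 0) ∈ μ := YoungDiagram.mem_iff_lt_colLen.2 (by omega)
  have := YoungDiagram.mem_iff_lt_rowLen.1 this
  omega

lemma colLen_trunc_zero : (trunc μ p).colLen 0 = p := by
  refine colLen_eq fun i => ?_
  rw [mem_trunc]
  constructor
  · exact fun h => h.2
  · intro h
    exact ⟨YoungDiagram.mem_iff_lt_colLen.2 (by omega), h⟩

lemma colLen_full {j : ℕ} (hj : j < μ.rowLen p) : μ.colLen j = p + 1 := by
  refine colLen_eq fun i => ?_
  constructor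
  · intro h
    have := cell_lt_colLen h
    simpa [hp] using this
  · intro h
    exact μ.up_left_mem (show i ≤ p by omega) le_rfl (YoungDiagram.mem_iff_lt_rowLen.2 hj)

lemma colLen_trunc_lt {j : ℕ} (hj : j < μ.rowLen p) : (trunc μ p).colLen j = p := by
  refine colLen_eq fun i => ?_
  rw [mem_trunc]
  constructor
  · exact fun h => h.2
  · intro h
    refine ⟨YoungDiagram.mem_iff_lt_rowLen.2 (lt_of_lt_of_le hj (μ.rowLen_anti i p (by omega))), h⟩

omit hp in
lemma colLen_le_of_ge {j : ℕ} (hj : μ.rowLen p ≤ j) : μ.colLen j ≤ p := by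
  by_contra h'
  push_neg at h'
  have : (p, j) ∈ μ := YoungDiagram.mem_iff_lt_colLen.2 h'
  have := YoungDiagram.mem_iff_lt_rowLen.1 this
  omega

omit hp in
lemma colLen_trunc_ge {j : ℕ} (hj : μ.rowLen p ≤ j) : (trunc μ p).colLen j = μ.colLen j := by
  refine colLen_eq fun i => ?_
  rw [mem_trunc, YoungDiagram.mem_iff_lt_colLen]
  constructor
  · exact fun h => h.1
  · intro h
    exact ⟨h, lt_of_lt_of_le h (colLen_le_of_ge hj)⟩

lemma sum_split (g : ℕ × ℕ → Laurent2) :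
    ∑ c ∈ μ.cells, g c
      = ∑ c ∈ (trunc μ p).cells, g c + ∑ j ∈ range (μ.rowLen p), g (p, j) := by
  rw [← Finset.sum_filter_add_sum_filter_not μ.cells (fun c => c.1 < p)]
  congr 1
  have : μ.cells.filter (fun c => ¬ c.1 < p)
      = (range (μ.rowLen p)).image (fun j => (p, j)) := by
    ext c
    obtain ⟨a, b⟩ := c
    simp only [Finset.mem_filter, Finset.mem_image, Finset.mem_range, YoungDiagram.mem_cells,
      not_lt, Prod.mk.injEq]
    constructor
    · rintro ⟨hm, hge⟩
      have h1 := cell_lt_colLen hm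
      rw [hp] at h1
      have ha : a = p := by simp at h1 ⊢; omega
      subst ha
      exact ⟨b, YoungDiagram.mem_iff_lt_rowLen.1 hm, rfl, rfl⟩
    · rintro ⟨j, hj, rfl, rfl⟩
      exact ⟨YoungDiagram.mem_iff_lt_rowLen.2 hj, le_rfl⟩
  rw [this, Finset.sum_image (by intro a _ b _ hab; simpa using hab)]

omit hp in
lemma rect_eq :
    (trunc μ p).cells.filter (fun c => c.2 < μ.rowLen p) = (range p) ×ˢ (range (μ.rowLen p)) := by
  ext c
  obtain ⟨a, b⟩ := c
  simp only [Finset.mem_filter, Finset.mem_product, Finset.mem_range, YoungDiagram.mem_cells,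
    mem_trunc]
  constructor
  · rintro ⟨⟨_, hap⟩, hbm⟩
    exact ⟨hap, hbm⟩
  · rintro ⟨hap, hbm⟩
    exact ⟨⟨YoungDiagram.mem_iff_lt_rowLen.2
      (lt_of_lt_of_le hbm (μ.rowLen_anti a p (by omega))), hap⟩, hbm⟩

end TruncFacts

lemma smul_pair (n : ℕ) (a b : ℤ) : n • ((a, b) : ℤ × ℤ) = ((n : ℤ) * a, (n : ℤ) * b) := by
  simp [Prod.smul_def, nsmul_eq_mul]

noncomputable def Rm (m : ℕ) : Laurent2 := ∑ j ∈ range m, T2 (0, -(j:ℤ))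
noncomputable def Rbm (m : ℕ) : Laurent2 := ∑ j ∈ range m, T2 (0, (j:ℤ))
noncomputable def Gp (p : ℕ) : Laurent2 := ∑ i ∈ range p, T2 ((i:ℤ), 0)
noncomputable def Gbp (p : ℕ) : Laurent2 := ∑ i ∈ range p, T2 (-(i:ℤ), 0)
noncomputable def Wb (μ : YoungDiagram) (p : ℕ) : Laurent2 :=
  ∑ i ∈ range p, T2 ((i:ℤ), (μ.rowLen i : ℤ))
noncomputable def Wd (μ : YoungDiagram) (p : ℕ) : Laurent2 :=
  ∑ i ∈ range p, T2 (-(i:ℤ), -(μ.rowLen i : ℤ))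

lemma pair_eq {a b c d : ℤ} (h1 : a = c) (h2 : b = d) : ((a,b) : ℤ×ℤ) = (c,d) := by
  rw [h1, h2]

lemma eG (p : ℕ) : (1 - T2 (1,0)) * Gp p = 1 - T2 ((p:ℤ), 0) := by
  have h := telescope (1,0) 0 p
  have h2 : ∑ j ∈ range p, T2 ((0:ℤ×ℤ) + j • ((1:ℤ),(0:ℤ))) = Gp p :=
    Finset.sum_congr rfl (fun i _ => by rw [smul_pair]; norm_num)
  rw [h2, smul_pair, T2_zero] at h
  simpa using h

lemma eGb (p : ℕ) : (1 - T2 (-1,0)) * Gbp p = 1 - T2 (-(p:ℤ), 0) := by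
  have h := telescope (-1,0) 0 p
  have h2 : ∑ j ∈ range p, T2 ((0:ℤ×ℤ) + j • ((-1:ℤ),(0:ℤ))) = Gbp p :=
    Finset.sum_congr rfl (fun i _ => by rw [smul_pair]; norm_num)
  rw [h2, smul_pair, T2_zero] at h
  simpa using h

lemma eRb (m : ℕ) : (1 - T2 (0,1)) * Rbm m = 1 - T2 (0, (m:ℤ)) := by
  have h := telescope (0,1) 0 m
  have h2 : ∑ j ∈ range m, T2 ((0:ℤ×ℤ) + j • ((0:ℤ),(1:ℤ))) = Rbm m :=
    Finset.sum_congr rfl (fun i _ => by rw [smul_pair]; norm_num)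
  rw [h2, smul_pair, T2_zero] at h
  simpa using h

lemma eR10 (m : ℕ) : T2 (0,1) * Rbm m = T2 (0, (m:ℤ)) * Rm m := by
  rw [Rbm, Rm, Finset.mul_sum, Finset.mul_sum, ← Finset.sum_range_reflect]
  refine Finset.sum_congr rfl fun j hj => ?_
  simp only [Finset.mem_range] at hj
  rw [T2_mul, T2_mul]
  congr 1
  exact pair_eq (by norm_num) (by omega)

lemma eN1 (m : ℕ) : ∑ j ∈ range m, T2 (0, (m:ℤ) - j) = T2 (0,1) * Rbm m := by
  rw [Rbm, Finset.mul_sum, ← Finset.sum_range_reflect (fun j => T2 (0, (m:ℤ) - j)) m]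
  refine Finset.sum_congr rfl fun j hj => ?_
  simp only [Finset.mem_range] at hj
  rw [T2_mul, Prod.mk_add_mk]
  congr 1
  exact pair_eq (by norm_num) (by omega)

lemma eN2 (m : ℕ) : ∑ j ∈ range m, T2 (1, (j:ℤ) + 1 - m) = T2 (1,0) * Rm m := by
  rw [Rm, Finset.mul_sum, ← Finset.sum_range_reflect (fun j => T2 (1, (j:ℤ) + 1 - m)) m]
  refine Finset.sum_congr rfl fun j hj => ?_
  simp only [Finset.mem_range] at hj
  rw [T2_mul, Prod.mk_add_mk]
  congr 1
  exact pair_eq (by norm_num) (by omega)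

lemma eZbar_trunc {μ : YoungDiagram} {p : ℕ} (hp : μ.colLen 0 = p + 1) :
    (1 - T2 (0,1)) * Zbarof (trunc μ p) = Gp p - Wb μ p := by
  rw [Zbarof, sum_cells, colLen_trunc_zero hp, Finset.mul_sum, Gp, Wb,
    ← Finset.sum_sub_distrib]
  refine Finset.sum_congr rfl fun i hi => ?_
  rw [rowLen_trunc i (Finset.mem_range.1 hi)]
  have h := telescope (0,1) ((i:ℤ), 0) (μ.rowLen i)
  have h2 : ∑ j ∈ range (μ.rowLen i), T2 (((i:ℤ),(0:ℤ)) + j • ((0:ℤ),(1:ℤ)))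
      = ∑ j ∈ range (μ.rowLen i), T2 ((i:ℤ),(j:ℤ)) :=
    Finset.sum_congr rfl (fun j _ => by rw [smul_pair]; norm_num)
  rw [h2, smul_pair] at h
  simpa using h

lemma eZ_trunc {μ : YoungDiagram} {p : ℕ} (hp : μ.colLen 0 = p + 1) :
    (1 - T2 (0,-1)) * Zof (trunc μ p) = Gbp p - Wd μ p := by
  rw [Zof, sum_cells, colLen_trunc_zero hp, Finset.mul_sum, Gbp, Wd,
    ← Finset.sum_sub_distrib]
  refine Finset.sum_congr rfl fun i hi => ?_
  rw [rowLen_trunc i (Finset.mem_range.1 hi)]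
  have h := telescope (0,-1) (-(i:ℤ), 0) (μ.rowLen i)
  have h2 : ∑ j ∈ range (μ.rowLen i), T2 ((-(i:ℤ),(0:ℤ)) + j • ((0:ℤ),(-1:ℤ)))
      = ∑ j ∈ range (μ.rowLen i), T2 (-(i:ℤ),-(j:ℤ)) :=
    Finset.sum_congr rfl (fun j _ => by rw [smul_pair]; norm_num)
  rw [h2, smul_pair] at h
  simpa using h

lemma eZsplit {μ : YoungDiagram} {p : ℕ} (hp : μ.colLen 0 = p + 1) :
    Zof μ = Zof (trunc μ p) + T2 (-(p:ℤ), 0) * Rm (μ.rowLen p) := by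
  rw [Zof, sum_split hp, Rm, Finset.mul_sum]
  congr 1
  refine Finset.sum_congr rfl fun j _ => ?_
  rw [T2_mul, Prod.mk_add_mk]
  congr 1
  exact pair_eq (by norm_num) (by norm_num)

lemma eZbsplit {μ : YoungDiagram} {p : ℕ} (hp : μ.colLen 0 = p + 1) :
    Zbarof μ = Zbarof (trunc μ p) + T2 ((p:ℤ), 0) * Rbm (μ.rowLen p) := by
  rw [Zbarof, sum_split hp, Rbm, Finset.mul_sum]
  congr 1
  refine Finset.sum_congr rfl fun j _ => ?_
  rw [T2_mul, Prod.mk_add_mk]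
  congr 1
  exact pair_eq (by norm_num) (by norm_num)

lemma T2_mul' (a b c d : ℤ) : T2 (a,b) * T2 (c,d) = T2 (a+c, b+d) := by
  rw [T2_mul, Prod.mk_add_mk]

noncomputable def Fc (μ : YoungDiagram) (c : ℕ × ℕ) : Laurent2 :=
  T2 (-(legLength μ c : ℤ), (armLength μ c : ℤ) + 1)
    + T2 ((legLength μ c : ℤ) + 1, -(armLength μ c : ℤ))

noncomputable def Dij (μ : YoungDiagram) (p i j : ℕ) : Laurent2 :=
  T2 ((i:ℤ)-p, (μ.rowLen i:ℤ)-j) - T2 ((i:ℤ)+1-p, (μ.rowLen i:ℤ)-j)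
  + T2 ((p:ℤ)-i+1, (j:ℤ)+1-(μ.rowLen i:ℤ)) - T2 ((p:ℤ)-i, (j:ℤ)+1-(μ.rowLen i:ℤ))

lemma eDi (μ : YoungDiagram) (p m i : ℕ) :
    ∑ j ∈ range m, Dij μ p i j
      = (1 - T2 (1,0)) * T2 (-(p:ℤ),0) * T2 ((i:ℤ),(μ.rowLen i:ℤ)) * Rm m
        + (T2 (1,0) - 1) * (T2 ((p:ℤ),0) * T2 (0,1)) * T2 (-(i:ℤ),-(μ.rowLen i:ℤ)) * Rbm m := by
  have sA : ∑ j ∈ range m, T2 ((i:ℤ)-p, (μ.rowLen i:ℤ)-(j:ℤ))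
      = T2 (-(p:ℤ),0) * T2 ((i:ℤ),(μ.rowLen i:ℤ)) * Rm m := by
    rw [Rm]
    simp only [Finset.mul_sum, Finset.sum_mul]
    refine Finset.sum_congr rfl fun j _ => ?_
    simp only [T2_mul']
    congr 1
    exact pair_eq (by ring) (by ring)
  have sB : ∑ j ∈ range m, T2 ((i:ℤ)+1-p, (μ.rowLen i:ℤ)-(j:ℤ))
      = T2 (1,0) * (T2 (-(p:ℤ),0) * T2 ((i:ℤ),(μ.rowLen i:ℤ))) * Rm m := by
    rw [Rm]
    simp only [Finset.mul_sum, Finset.sum_mul]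
    refine Finset.sum_congr rfl fun j _ => ?_
    simp only [T2_mul']
    congr 1
    exact pair_eq (by ring) (by ring)
  have sC : ∑ j ∈ range m, T2 ((p:ℤ)-i+1, (j:ℤ)+1-(μ.rowLen i:ℤ))
      = T2 (1,0) * (T2 ((p:ℤ),0) * T2 (0,1) * T2 (-(i:ℤ),-(μ.rowLen i:ℤ))) * Rbm m := by
    rw [Rbm]
    simp only [Finset.mul_sum, Finset.sum_mul]
    refine Finset.sum_congr rfl fun j _ => ?_
    simp only [T2_mul']
    congr 1
    exact pair_eq (by ring) (by ring)
  have sE : ∑ j ∈ range m, T2 ((p:ℤ)-i, (j:ℤ)+1-(μ.rowLen i:ℤ))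
      = (T2 ((p:ℤ),0) * T2 (0,1) * T2 (-(i:ℤ),-(μ.rowLen i:ℤ))) * Rbm m := by
    rw [Rbm]
    simp only [Finset.mul_sum, Finset.sum_mul]
    refine Finset.sum_congr rfl fun j _ => ?_
    simp only [T2_mul']
    congr 1
    exact pair_eq (by ring) (by ring)
  simp only [Dij, Finset.sum_add_distrib, Finset.sum_sub_distrib]
  rw [sA, sB, sC, sE]
  ring

lemma eD (μ : YoungDiagram) (p m : ℕ) :
    ∑ i ∈ range p, ∑ j ∈ range m, Dij μ p i j
      = (1 - T2 (1,0)) * T2 (-(p:ℤ),0) * Wb μ p * Rm m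
        + (T2 (1,0) - 1) * (T2 ((p:ℤ),0) * T2 (0,1)) * Wd μ p * Rbm m := by
  rw [show ∑ i ∈ range p, ∑ j ∈ range m, Dij μ p i j
      = ∑ i ∈ range p,
        ((1 - T2 (1,0)) * T2 (-(p:ℤ),0) * T2 ((i:ℤ),(μ.rowLen i:ℤ)) * Rm m
          + (T2 (1,0) - 1) * (T2 ((p:ℤ),0) * T2 (0,1)) * T2 (-(i:ℤ),-(μ.rowLen i:ℤ)) * Rbm m)
    from Finset.sum_congr rfl fun i _ => eDi μ p m i]
  rw [Finset.sum_add_distrib, Wb, Wd]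
  simp only [← Finset.sum_mul, ← Finset.mul_sum]

lemma eRHS {μ : YoungDiagram} {p : ℕ} (hp : μ.colLen 0 = p + 1) :
    ∑ c ∈ μ.cells, Fc μ c
      = ∑ c ∈ (trunc μ p).cells, Fc (trunc μ p) c
        + ∑ j ∈ range (μ.rowLen p),
            (T2 (0, (μ.rowLen p : ℤ) - j) + T2 (1, (j:ℤ) + 1 - (μ.rowLen p : ℤ)))
        + ∑ i ∈ range p, ∑ j ∈ range (μ.rowLen p), Dij μ p i j := by
  rw [sum_split hp]
  have claim1 : ∑ j ∈ range (μ.rowLen p), Fc μ (p, j)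
      = ∑ j ∈ range (μ.rowLen p),
          (T2 (0, (μ.rowLen p : ℤ) - j) + T2 (1, (j:ℤ) + 1 - (μ.rowLen p : ℤ))) := by
    refine Finset.sum_congr rfl fun j hj => ?_
    have hj' : j < μ.rowLen p := Finset.mem_range.1 hj
    have hmem : (p, j) ∈ μ := YoungDiagram.mem_iff_lt_rowLen.2 hj'
    have hleg := leg_eq hmem
    rw [colLen_full hp hj'] at hleg
    have harm := arm_eq hmem
    rw [Fc]
    rw [show (-(legLength μ (p,j) : ℤ), (armLength μ (p,j) : ℤ) + 1)
        = ((0:ℤ), (μ.rowLen p : ℤ) - j) from pair_eq (by omega) (by omega),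
      show ((legLength μ (p,j) : ℤ) + 1, -(armLength μ (p,j) : ℤ))
        = ((1:ℤ), (j:ℤ) + 1 - (μ.rowLen p : ℤ)) from pair_eq (by omega) (by omega)]
  have claim2 : ∑ c ∈ (trunc μ p).cells, Fc μ c
      = ∑ c ∈ (trunc μ p).cells, Fc (trunc μ p) c
        + ∑ i ∈ range p, ∑ j ∈ range (μ.rowLen p), Dij μ p i j := by
    have percell : ∀ c ∈ (trunc μ p).cells,
        Fc μ c = Fc (trunc μ p) c
          + (if c.2 < μ.rowLen p then Dij μ p c.1 c.2 else 0) := by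
      rintro ⟨i, j⟩ hc
      have hν : (i, j) ∈ trunc μ p := ((trunc μ p).mem_cells _).1 hc
      obtain ⟨hμij, hip⟩ := mem_trunc.1 hν
      have harmμ := arm_eq hμij
      have harmν := arm_eq hν
      rw [rowLen_trunc i hip] at harmν
      have hlegμ := leg_eq hμij
      have hlegν := leg_eq hν
      by_cases h : j < μ.rowLen p
      · rw [colLen_full hp h] at hlegμ
        rw [colLen_trunc_lt hp h] at hlegν
        rw [if_pos h, Fc, Fc, Dij]
        rw [show (-(legLength μ (i,j) : ℤ), (armLength μ (i,j) : ℤ) + 1)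
            = ((i:ℤ) - p, (μ.rowLen i : ℤ) - j) from pair_eq (by omega) (by omega),
          show ((legLength μ (i,j) : ℤ) + 1, -(armLength μ (i,j) : ℤ))
            = ((p:ℤ) - i + 1, (j:ℤ) + 1 - (μ.rowLen i : ℤ)) from pair_eq (by omega) (by omega),
          show (-(legLength (trunc μ p) (i,j) : ℤ), (armLength (trunc μ p) (i,j) : ℤ) + 1)
            = ((i:ℤ) + 1 - p, (μ.rowLen i : ℤ) - j) from pair_eq (by omega) (by omega),
          show ((legLength (trunc μ p) (i,j) : ℤ) + 1, -(armLength (trunc μ p) (i,j) : ℤ))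
            = ((p:ℤ) - i, (j:ℤ) + 1 - (μ.rowLen i : ℤ)) from pair_eq (by omega) (by omega)]
        ring
      · rw [colLen_trunc_ge (by omega)] at hlegν
        rw [if_neg h, add_zero, Fc, Fc]
        have h1 : legLength (trunc μ p) (i,j) = legLength μ (i,j) := by omega
        have h2 : armLength (trunc μ p) (i,j) = armLength μ (i,j) := by omega
        rw [h1, h2]
    rw [Finset.sum_congr rfl percell, Finset.sum_add_distrib]
    congr 1
    rw [← Finset.sum_filter, rect_eq, Finset.sum_product]
  rw [claim1, claim2]; ring


theorem stmt0 (μ : YoungDiagram) :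
    Zof μ + T2 (1, 1) * Zbarof μ
      - (1 - T2 (1, 0)) * (1 - T2 (0, 1)) * (Zof μ * Zbarof μ)
    = ∑ c ∈ μ.cells,
        (T2 (-(legLength μ c : ℤ), (armLength μ c : ℤ) + 1)
          + T2 ((legLength μ c : ℤ) + 1, -(armLength μ c : ℤ))) := by
  have key : ∀ n (μ : YoungDiagram), μ.colLen 0 = n →
      Zof μ + T2 (1,1) * Zbarof μ
        - (1 - T2 (1,0)) * (1 - T2 (0,1)) * (Zof μ * Zbarof μ)
      = ∑ c ∈ μ.cells, Fc μ c := by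
    intro n
    induction n with
    | zero =>
      intro μ h0
      have hempty : μ.cells = ∅ := by
        ext c
        simp only [Finset.notMem_empty, iff_false]
        intro hc
        have := cell_lt_colLen ((μ.mem_cells c).1 hc)
        omega
      simp [Zof, Zbarof, hempty]
    | succ p ih =>
      intro μ hp
      have IH := ih (trunc μ p) (colLen_trunc_zero hp)
      set m := μ.rowLen p with hm
      rw [eZsplit hp, eZbsplit hp, eRHS hp, eD μ p m, Finset.sum_add_distrib, eN1 m, eN2 m]
      have hA : T2 (-(p:ℤ),0) * T2 ((p:ℤ),0) = 1 := by
        rw [T2_mul']; norm_num [T2_zero]; exact T2_zero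
      have hB : T2 ((1:ℤ),0) * T2 (-1,0) = 1 := by
        rw [T2_mul']; norm_num [T2_zero]; exact T2_zero
      have hC : T2 ((0:ℤ),1) * T2 (0,-1) = 1 := by
        rw [T2_mul']; norm_num [T2_zero]; exact T2_zero
      have h12 : T2 ((1:ℤ),0) * T2 (0,1) = T2 (1,1) := by
        rw [T2_mul']; norm_num
      have hG := eG p
      have hGb := eGb p
      have hRb := eRb m
      have hR10 := eR10 m
      have hZb := eZbar_trunc hp
      have hZ := eZ_trunc hp
      linear_combination IH
        - (T2 ((p:ℤ),0) * Rbm m) * h12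
        + ((T2 ((1:ℤ),0) - 1) * T2 (-(p:ℤ),0) * Rm m) * hZb
        + ((1 - T2 ((1:ℤ),0)) * T2 ((0:ℤ),1) * T2 ((p:ℤ),0) * Rbm m) * hZ
        + (-(T2 (-(p:ℤ),0) * Rm m)) * hG
        + (-(T2 ((1:ℤ),0) * T2 ((0:ℤ),1) * T2 ((p:ℤ),0) * Rbm m)) * hGb
        + (-(T2 ((0:ℤ),1) * T2 ((p:ℤ),0) * Rbm m * Gbp p)) * hB
        + ((1 - T2 ((1:ℤ),0)) * Zof (trunc μ p) * T2 ((p:ℤ),0) * Rbm m) * hC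
        + (T2 ((1:ℤ),0) * T2 ((0:ℤ),1) * Rbm m + Rm m - Rm m * Rbm m
            + T2 ((0:ℤ),1) * Rm m * Rbm m + T2 ((1:ℤ),0) * Rm m * Rbm m
            - T2 ((1:ℤ),0) * T2 ((0:ℤ),1) * Rm m * Rbm m) * hA
        + ((T2 ((1:ℤ),0) - 1) * Rm m) * hRb
        + (T2 ((1:ℤ),0) - 1) * hR10
  have := key (μ.colLen 0) μ rfl
  simpa [Fc] using this
end

section
/- For every Young diagram λ, the map sending a reverse plane partition m of shape λ to the set σ(m) = {(i,j,k) ∈ ℤ³ : (i,j) ∈ λ, k ≥ 0} ∪ {(i,j,k) ∈ ℤ³ : (i,j) ∈ λ, −m_{(i,j)} ≤ k ≤ −1} is a bijection from the set of reverse plane partitions of shape λ onto the set of 1-leg PT box arrangements with asymptotic profile λ, and it satisfies |σ(m)| = |m| (normalized size equals size). -/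
/-!
STATEMENT 10: For every Young diagram λ, m ↦ σ(m) = {(i,j,k) : (i,j) ∈ λ, k ≥ 0}
∪ {(i,j,k) : (i,j) ∈ λ, −m_{(i,j)} ≤ k ≤ −1} is a bijection from reverse plane
partitions of shape λ onto 1-leg PT box arrangements with asymptotic profile λ,
and the normalized size |σ(m)| = #(σ(m)∖σ′) equals |m| (and is finite).
-/

open Finset

/-- A reverse plane partition of shape λ. -/
structure RPP (μ : YoungDiagram) where
  toFun : ℕ × ℕ → ℕ
  eq_zero_of_not_mem : ∀ c ∉ μ, toFun c = 0
  monotone : ∀ c c' : ℕ × ℕ, c ∈ μ → c' ∈ μ → c.1 ≤ c'.1 → c.2 ≤ c'.2 →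
    toFun c ≤ toFun c'

/-- The size |m| = Σ_{□∈λ} m_□ of a reverse plane partition. -/
def RPP.size {μ : YoungDiagram} (m : RPP μ) : ℕ :=
  ∑ c ∈ μ.cells, m.toFun c

/-- Membership (i,j) ∈ λ for integer coordinates. -/
def memZ (lam : YoungDiagram) (i j : ℤ) : Prop :=
  0 ≤ i ∧ 0 ≤ j ∧ (i.toNat, j.toNat) ∈ lam

/-- The infinite leg σ′ = {(i,j,k) ∈ ℤ³ : (i,j) ∈ λ, k ≥ 0}. -/
def legSet (lam : YoungDiagram) : Set (ℤ × ℤ × ℤ) :=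
  {p | memZ lam p.1 p.2.1 ∧ 0 ≤ p.2.2}

/-- A 1-leg PT box arrangement with asymptotic profile λ: σ = σ′ ∪ σ″ with σ″
finite, disjoint from σ′, supported over λ in negative heights, upward closed in
the third coordinate (below 0), and closed under the gravity condition. -/
def IsPTArrangement (lam : YoungDiagram) (σ : Set (ℤ × ℤ × ℤ)) : Prop :=
  ∃ s'' : Set (ℤ × ℤ × ℤ),
    σ = legSet lam ∪ s'' ∧ s''.Finite ∧ Disjoint (legSet lam) s'' ∧
    (∀ p ∈ s'', memZ lam p.1 p.2.1 ∧ p.2.2 < 0) ∧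
    (∀ i j k : ℤ, k < 0 → (i, j, k - 1) ∈ s'' → (i, j, k) ∈ s'') ∧
    (∀ i j k : ℤ, memZ lam i j →
      ((i - 1, j, k) ∈ s'' ∨ (i, j - 1, k) ∈ s'') → (i, j, k) ∈ s'')

/-- The map m ↦ σ(m). -/
def toPT (lam : YoungDiagram) (m : RPP lam) : Set (ℤ × ℤ × ℤ) :=
  legSet lam ∪
    {p | memZ lam p.1 p.2.1 ∧
      -(m.toFun (p.1.toNat, p.2.1.toNat) : ℤ) ≤ p.2.2 ∧ p.2.2 ≤ -1}

lemma downclosed_mem_iff (T : Finset ℕ) (h : ∀ a b : ℕ, a ≤ b → b ∈ T → a ∈ T) (x : ℕ) :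
    x ∈ T ↔ x < T.card := by
  constructor
  · intro hx
    have hsub : Finset.Iic x ⊆ T := fun a ha => h a x (Finset.mem_Iic.mp ha) hx
    have := Finset.card_le_card hsub
    rw [Nat.card_Iic] at this; omega
  · intro hlt
    by_contra hx
    have hsub : T ⊆ Finset.Iio x := by
      intro b hb
      rw [Finset.mem_Iio]
      by_contra h'
      exact hx (h x b (le_of_not_gt h') hb)
    have := Finset.card_le_card hsub
    rw [Nat.card_Iio] at this; omega

def sig2 (lam : YoungDiagram) (m : RPP lam) : Set (ℤ × ℤ × ℤ) :=
  {p | memZ lam p.1 p.2.1 ∧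
    -(m.toFun (p.1.toNat, p.2.1.toNat) : ℤ) ≤ p.2.2 ∧ p.2.2 ≤ -1}

lemma toPT_def (lam : YoungDiagram) (m : RPP lam) :
    toPT lam m = legSet lam ∪ sig2 lam m := rfl

lemma disj_sig2 (lam : YoungDiagram) (m : RPP lam) :
    Disjoint (legSet lam) (sig2 lam m) := by
  rw [Set.disjoint_left]
  rintro p ⟨_, hk⟩ ⟨_, _, hk'⟩
  omega

def Fm (lam : YoungDiagram) (m : RPP lam) : Finset (ℤ × ℤ × ℤ) :=
  lam.cells.biUnion fun c =>
    (Finset.range (m.toFun c)).image fun n : ℕ => ((c.1 : ℤ), (c.2 : ℤ), -(n : ℤ) - 1)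

lemma sig2_eq_coe (lam : YoungDiagram) (m : RPP lam) :
    sig2 lam m = ↑(Fm lam m) := by
  ext ⟨i, j, k⟩
  simp only [sig2, memZ, Set.mem_setOf_eq, Fm, Finset.coe_biUnion, Set.mem_iUnion,
    Finset.mem_coe, Finset.mem_image, Finset.mem_range, YoungDiagram.mem_cells,
    Prod.mk.injEq, exists_prop]
  constructor
  · rintro ⟨⟨hi, hj, hc⟩, h1, h2⟩
    exact ⟨(i.toNat, j.toNat), hc, (-k - 1).toNat, by omega, by simp; omega, by simp; omega,
      by omega⟩
  · rintro ⟨⟨a, b⟩, hab, n, hn, h1, h2, h3⟩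
    subst h1; subst h2; subst h3
    simp only [Int.toNat_natCast]
    exact ⟨⟨by positivity, by positivity, hab⟩, by omega, by omega⟩

lemma card_Fm (lam : YoungDiagram) (m : RPP lam) : (Fm lam m).card = m.size := by
  rw [Fm, Finset.card_biUnion]
  · refine Finset.sum_congr rfl fun c _ => ?_
    rw [Finset.card_image_of_injective, Finset.card_range]
    intro a b hab
    simp only [Prod.mk.injEq] at hab
    omega
  · intro c _ d _ hcd
    rw [Function.onFun, Finset.disjoint_left]
    rintro p hp hq
    simp only [Finset.mem_image, Finset.mem_range] at hp hq
    obtain ⟨n, _, rfl⟩ := hp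
    obtain ⟨n', _, heq⟩ := hq
    simp only [Prod.mk.injEq] at heq
    exact hcd (Prod.ext (by exact_mod_cast heq.1.symm) (by exact_mod_cast heq.2.1.symm))

lemma diff_leg (lam : YoungDiagram) (m : RPP lam) :
    toPT lam m \ legSet lam = sig2 lam m := by
  ext p
  constructor
  · rintro ⟨hmem, hn⟩
    rcases hmem with hleg | hsig
    · exact absurd hleg hn
    · exact hsig
  · intro h
    refine ⟨Or.inr h, fun hleg => ?_⟩
    have h1 := hleg.2
    have h2 := h.2.2
    omega

lemma memZ_natCast (lam : YoungDiagram) (a b : ℕ) (hab : (a, b) ∈ lam) :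
    memZ lam (a : ℤ) (b : ℤ) :=
  ⟨by positivity, by positivity, by simpa using hab⟩

lemma le_of_toPT_eq (lam : YoungDiagram) (m m' : RPP lam)
    (h : toPT lam m = toPT lam m') (c : ℕ × ℕ) (hc : c ∈ lam) :
    m.toFun c ≤ m'.toFun c := by
  obtain ⟨a, b⟩ := c
  by_cases h0 : m.toFun (a, b) = 0
  · omega
  · have hp : ((a : ℤ), (b : ℤ), -(m.toFun (a, b) : ℤ)) ∈ toPT lam m := by
      refine Or.inr ⟨memZ_natCast lam a b hc, ?_, ?_⟩
      · show -(m.toFun (((a : ℤ)).toNat, ((b : ℤ)).toNat) : ℤ) ≤ -(m.toFun (a, b) : ℤ)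
        simp only [Int.toNat_natCast]
        omega
      · show -(m.toFun (a, b) : ℤ) ≤ -1
        omega
    rw [h] at hp
    rcases hp with hleg | ⟨_, h1, _⟩
    · have h2 : (0 : ℤ) ≤ -(m.toFun (a, b) : ℤ) := hleg.2
      omega
    · have h1' : -(m'.toFun (((a : ℤ)).toNat, ((b : ℤ)).toNat) : ℤ) ≤ -(m.toFun (a, b) : ℤ) := h1
      simp only [Int.toNat_natCast] at h1'
      omega

theorem stmt10 (lam : YoungDiagram) :
    Set.BijOn (toPT lam) Set.univ {σ | IsPTArrangement lam σ} ∧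
    ∀ m : RPP lam,
      (toPT lam m \ legSet lam).Finite ∧
      (toPT lam m \ legSet lam).ncard = m.size := by
  constructor
  · refine ⟨?_, ?_, ?_⟩
    -- MapsTo
    · intro m _
      refine ⟨sig2 lam m, toPT_def lam m, by rw [sig2_eq_coe]; exact (Fm lam m).finite_toSet,
        disj_sig2 lam m, ?_, ?_, ?_⟩
      · rintro p ⟨hm, _, h2⟩
        exact ⟨hm, by omega⟩
      · rintro i j k hk ⟨hm, h1, h2⟩
        have h1' : -(m.toFun (i.toNat, j.toNat) : ℤ) ≤ k - 1 := h1
        have h2' : k - 1 ≤ -1 := h2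
        exact ⟨hm, by show -(m.toFun (i.toNat, j.toNat) : ℤ) ≤ k; omega,
          by show k ≤ -1; omega⟩
      · rintro i j k hm (⟨hm', h1, h2⟩ | ⟨hm', h1, h2⟩)
        · refine ⟨hm, ?_, h2⟩
          have hm'' : memZ lam (i - 1) j := hm'
          have h1' : -(m.toFun ((i - 1).toNat, j.toNat) : ℤ) ≤ k := h1
          have hi : 0 ≤ i - 1 := hm''.1
          have hle : m.toFun ((i - 1).toNat, j.toNat) ≤ m.toFun (i.toNat, j.toNat) :=
            m.monotone _ _ hm''.2.2 hm.2.2 (by omega) (by omega)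
          show -(m.toFun (i.toNat, j.toNat) : ℤ) ≤ k
          omega
        · refine ⟨hm, ?_, h2⟩
          have hm'' : memZ lam i (j - 1) := hm'
          have h1' : -(m.toFun (i.toNat, (j - 1).toNat) : ℤ) ≤ k := h1
          have hj : 0 ≤ j - 1 := hm''.2.1
          have hle : m.toFun (i.toNat, (j - 1).toNat) ≤ m.toFun (i.toNat, j.toNat) :=
            m.monotone _ _ hm''.2.2 hm.2.2 (by omega) (by omega)
          show -(m.toFun (i.toNat, j.toNat) : ℤ) ≤ k
          omega
    -- InjOn
    · intro m _ m' _ heq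
      have hle : ∀ (a b : RPP lam), toPT lam a = toPT lam b → ∀ c, a.toFun c ≤ b.toFun c := by
        intro a b hab c
        by_cases hc : c ∈ lam
        · exact le_of_toPT_eq lam a b hab c hc
        · rw [a.eq_zero_of_not_mem c hc]; omega
      have h1 := hle m m' heq
      have h2 := hle m' m heq.symm
      cases m; cases m'
      simp only [RPP.mk.injEq]
      funext c
      exact le_antisymm (h1 c) (h2 c)
    -- SurjOn
    · intro σ hσ
      obtain ⟨s'', hσeq, hfin, hdisj, hsupp, hup, hgrav⟩ := hσ
      set K : ℕ × ℕ → Set ℤ := fun c => {k | ((c.1 : ℤ), (c.2 : ℤ), k) ∈ s''} with hK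
      have hKfin : ∀ c, (K c).Finite := by
        intro c
        have : K c = (fun k : ℤ => ((c.1 : ℤ), (c.2 : ℤ), k)) ⁻¹' s'' := rfl
        rw [this]
        exact Set.Finite.preimage (fun a _ b _ hab => by simpa using hab) hfin
      have hSfin : ∀ c : ℕ × ℕ, {n : ℕ | -(n : ℤ) - 1 ∈ K c}.Finite := by
        intro c
        have : {n : ℕ | -(n : ℤ) - 1 ∈ K c} = (fun n : ℕ => -(n : ℤ) - 1) ⁻¹' (K c) := rfl
        rw [this]
        exact Set.Finite.preimage (fun a _ b _ hab => by omega) (hKfin c)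
      set S : ℕ × ℕ → Set ℕ := fun c => {n : ℕ | -(n : ℤ) - 1 ∈ K c} with hS
      set T : ℕ × ℕ → Finset ℕ := fun c => (hSfin c).toFinset with hT
      have hTmem : ∀ c n, n ∈ T c ↔ n ∈ S c := fun c n => (hSfin c).mem_toFinset
      have hstep : ∀ c n, (n + 1) ∈ S c → n ∈ S c := by
        intro c n hn
        have hn' : ((c.1 : ℤ), (c.2 : ℤ), -(((n + 1 : ℕ)) : ℤ) - 1) ∈ s'' := hn
        have hcast : -(((n + 1 : ℕ)) : ℤ) - 1 = (-(n : ℤ) - 1) - 1 := by push_cast; ring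
        rw [hcast] at hn'
        exact hup (c.1 : ℤ) (c.2 : ℤ) (-(n : ℤ) - 1) (by omega) hn' 
      have hdc : ∀ c (a b : ℕ), a ≤ b → b ∈ T c → a ∈ T c := by
        intro c a b hab hb
        rw [hTmem] at hb ⊢
        obtain ⟨d, rfl⟩ := Nat.exists_eq_add_of_le hab
        clear hab
        induction d generalizing a with
        | zero => simpa using hb
        | succ d ih => exact hstep c a (ih (a + 1) (by rwa [show a + 1 + d = a + (d + 1) by omega]))
      have hKneg : ∀ c k, k ∈ K c → k ≤ -1 := by
        intro c k hk
        have h : k < 0 := (hsupp _ hk).2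
        omega
      have hKcell : ∀ c k, k ∈ K c → c ∈ lam := by
        intro c k hk
        have := (hsupp _ hk).1.2.2
        simpa using this
      have hKiff : ∀ c k, k ∈ K c ↔ -((T c).card : ℤ) ≤ k ∧ k ≤ -1 := by
        intro c k
        constructor
        · intro hk
          have hk1 := hKneg c k hk
          have hn : (-k - 1).toNat ∈ T c := by
            rw [hTmem]
            show ((c.1 : ℤ), (c.2 : ℤ), -(((-k - 1).toNat : ℤ)) - 1) ∈ s''
            have he : -(((-k - 1).toNat : ℤ)) - 1 = k := by omega
            rw [he]
            exact hk
          have := (downclosed_mem_iff (T c) (hdc c) _).mp hn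
          omega
        · rintro ⟨h1, h2⟩
          have hn : (-k - 1).toNat ∈ T c :=
            (downclosed_mem_iff (T c) (hdc c) _).mpr (by omega)
          rw [hTmem] at hn
          have hn' : ((c.1 : ℤ), (c.2 : ℤ), -(((-k - 1).toNat : ℤ)) - 1) ∈ s'' := hn
          have he : -(((-k - 1).toNat : ℤ)) - 1 = k := by omega
          rw [he] at hn'
          exact hn' 
      -- K is monotone along rows and columns
      have hKrow : ∀ (j i d : ℕ), (i + d, j) ∈ lam → K (i, j) ⊆ K (i + d, j) := by
        intro j i d
        induction d with
        | zero => simp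
        | succ d ih =>
          intro hmem k hk
          have hprev : (i + d, j) ∈ lam := lam.up_left_mem (by omega) le_rfl hmem
          have hk' : k ∈ K (i + d, j) := ih hprev hk
          have := hgrav ((i + d + 1 : ℕ) : ℤ) (j : ℤ) k
            (memZ_natCast lam _ _ hmem)
            (Or.inl (by
              have hcast : ((i + d + 1 : ℕ) : ℤ) - 1 = ((i + d : ℕ) : ℤ) := by push_cast; ring
              rw [hcast]; exact hk'))
          exact this
      have hKcol : ∀ (i j d : ℕ), (i, j + d) ∈ lam → K (i, j) ⊆ K (i, j + d) := by
        intro i j d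
        induction d with
        | zero => simp
        | succ d ih =>
          intro hmem k hk
          have hprev : (i, j + d) ∈ lam := lam.up_left_mem le_rfl (by omega) hmem
          have hk' : k ∈ K (i, j + d) := ih hprev hk
          have := hgrav ((i : ℕ) : ℤ) ((j + d + 1 : ℕ) : ℤ) k
            (memZ_natCast lam _ _ hmem)
            (Or.inr (by
              have hcast : ((j + d + 1 : ℕ) : ℤ) - 1 = ((j + d : ℕ) : ℤ) := by push_cast; ring
              rw [hcast]; exact hk'))
          exact this
      have hKmono : ∀ c c' : ℕ × ℕ, c' ∈ lam → c.1 ≤ c'.1 → c.2 ≤ c'.2 → K c ⊆ K c' := by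
        rintro ⟨a, b⟩ ⟨a', b'⟩ hc' h1 h2
        obtain ⟨d1, rfl⟩ := Nat.exists_eq_add_of_le h1
        obtain ⟨d2, rfl⟩ := Nat.exists_eq_add_of_le h2
        have hmid : (a + d1, b) ∈ lam := lam.up_left_mem le_rfl (by omega) hc'
        intro k hk
        exact hKcol (a + d1) b d2 hc' (hKrow b a d1 hmid hk)
      -- build the RPP
      refine ⟨⟨fun c => (T c).card, ?_, ?_⟩, Set.mem_univ _, ?_⟩
      · intro c hc
        rw [Finset.card_eq_zero, Finset.eq_empty_iff_forall_notMem]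
        intro n hn
        rw [hTmem] at hn
        exact hc (hKcell c _ hn)
      · intro c c' hc hc' h1 h2
        apply Finset.card_le_card
        intro n hn
        rw [hTmem] at hn ⊢
        exact hKmono c c' hc' h1 h2 hn
      · -- toPT lam m = σ
        rw [hσeq, toPT_def]
        congr 1
        ext ⟨i, j, k⟩
        simp only [sig2, Set.mem_setOf_eq]
        constructor
        · rintro ⟨⟨hi, hj, hc⟩, h1, h2⟩
          have h1' : -(((T (i.toNat, j.toNat)).card : ℤ)) ≤ k := h1
          have h2' : k ≤ (-1 : ℤ) := h2
          have hk : k ∈ K (i.toNat, j.toNat) := (hKiff _ k).mpr ⟨h1', h2'⟩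
          have hcast : ((i.toNat : ℤ), (j.toNat : ℤ), k) = (i, j, k) := by
            simp only [Prod.mk.injEq, and_true]; omega
          rw [hK] at hk
          simp only [Set.mem_setOf_eq] at hk
          rwa [hcast] at hk
        · intro hp
          obtain ⟨⟨hi, hj, hc⟩, hneg⟩ := hsupp _ hp
          simp only at hi hj hc hneg
          have hk : k ∈ K (i.toNat, j.toNat) := by
            rw [hK]
            simp only [Set.mem_setOf_eq]
            have hcast : ((i.toNat : ℤ), (j.toNat : ℤ), k) = (i, j, k) := by
              simp only [Prod.mk.injEq, and_true]; omega
            rwa [hcast]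
          have hkk := (hKiff _ k).mp hk
          exact ⟨⟨hi, hj, hc⟩, hkk.1, hkk.2⟩
  · intro m
    rw [diff_leg, sig2_eq_coe]
    exact ⟨(Fm lam m).finite_toSet, by rw [Set.ncard_coe_finset, card_Fm]⟩
end

section
/- Let λ be a Young diagram and n a skew plane partition of shape ℤ²_{≥0}∖λ. Set v_n^+ = Z_n − (1−t1)(1−t2)·( Z̄_λ·Z_n + Z_n·Z̄_n ) ∈ ℤ[t1^{±1},t2^{±1},t3^{±1}]. Then v_n = v_n^+ − (v_n^+)‾ · t1·t2·t3 in ℤ[t1^{±1},t2^{±1},t3^{±1}], where (·)‾ denotes the ring involution t_i ↦ t_i^{−1}; moreover the evaluation of v_n^+ at t1 = t2 = t3 = 1 equals |n|. -/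
/-!
STATEMENT 11: For a Young diagram λ and a skew plane partition n of shape
ℤ²_{≥0}∖λ, with v_n^+ = Z_n − (1−t1)(1−t2)(Z̄_λ Z_n + Z_n Z̄_n), one has
v_n = v_n^+ − (v_n^+)‾·t1t2t3 in ℤ[t1^{±1},t2^{±1},t3^{±1}], and the evaluation
of v_n^+ at t1 = t2 = t3 = 1 (the sum of its coefficients) equals |n|.
The Laurent ring is modelled as `AddMonoidAlgebra ℤ (ℤ×ℤ×ℤ)`; the involution
(·)‾ is induced by negating exponents.  The defining sum of Z_n over all boxes
of (ℕ×ℕ)∖λ is taken over the (finite) support of n: boxes with n_□ = 0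
contribute nothing.
-/

open Finset

/-- A skew plane partition of shape ℤ²_{≥0} ∖ λ. -/
structure SkewPP (μ : YoungDiagram) where
  toFun : ℕ × ℕ → ℕ
  eq_zero_of_mem : ∀ c ∈ μ, toFun c = 0
  finite_support : (Function.support toFun).Finite
  antitone : ∀ c c' : ℕ × ℕ, c ∉ μ → c' ∉ μ → c.1 ≤ c'.1 → c.2 ≤ c'.2 →
    toFun c' ≤ toFun c

/-- The size |n| = Σ_□ n_□ of a skew plane partition. -/
noncomputable def SkewPP.size {μ : YoungDiagram} (n : SkewPP μ) : ℕ :=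
  ∑ᶠ c : ℕ × ℕ, n.toFun c

/-- The Laurent polynomial ring ℤ[t1^{±1}, t2^{±1}, t3^{±1}]. -/
abbrev Laurent3 : Type := AddMonoidAlgebra ℤ (ℤ × ℤ × ℤ)

/-- The monomial t1^{w1}·t2^{w2}·t3^{w3}. -/
noncomputable def T3 (w : ℤ × ℤ × ℤ) : Laurent3 := AddMonoidAlgebra.single w 1

/-- The ring involution t_i ↦ t_i^{−1}: it negates all exponents. -/
noncomputable def bar3 (V : Laurent3) : Laurent3 :=
  AddMonoidAlgebra.ofCoeff (Finsupp.mapDomain (fun w : ℤ × ℤ × ℤ => -w) V.coeff)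

/-- Z_λ = Σ_{(i,j)∈λ} t1^{−i}t2^{−j}. -/
noncomputable def Zlam3 (μ : YoungDiagram) : Laurent3 :=
  ∑ c ∈ μ.cells, T3 (-(c.1 : ℤ), -(c.2 : ℤ), 0)

/-- Z_n = Σ_{(i,j)∈(ℕ×ℕ)∖λ} Σ_{α=0}^{n_{(i,j)}−1} t1^{−i}t2^{−j}t3^{−α}. -/
noncomputable def Zskew {μ : YoungDiagram} (n : SkewPP μ) : Laurent3 :=
  ∑ c ∈ n.finite_support.toFinset,
    ∑ α ∈ Finset.range (n.toFun c), T3 (-(c.1 : ℤ), -(c.2 : ℤ), -(α : ℤ))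

/-- The vertex term
v_n = Z_n − Z̄_n·t1t2t3 − (1−t1)(1−t2)(−t3·Z_λ·Z̄_n + Z̄_λ·Z_n + (1−t3)·Z_n·Z̄_n). -/
noncomputable def vDT {μ : YoungDiagram} (n : SkewPP μ) : Laurent3 :=
  Zskew n - bar3 (Zskew n) * T3 (1, 1, 1)
    - (1 - T3 (1, 0, 0)) * (1 - T3 (0, 1, 0)) *
        (-(T3 (0, 0, 1)) * (Zlam3 μ * bar3 (Zskew n))
          + bar3 (Zlam3 μ) * Zskew n
          + (1 - T3 (0, 0, 1)) * (Zskew n * bar3 (Zskew n)))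

/-- v_n^+ = Z_n − (1−t1)(1−t2)·(Z̄_λ·Z_n + Z_n·Z̄_n). -/
noncomputable def vPlus {μ : YoungDiagram} (n : SkewPP μ) : Laurent3 :=
  Zskew n - (1 - T3 (1, 0, 0)) * (1 - T3 (0, 1, 0)) *
      (bar3 (Zlam3 μ) * Zskew n + Zskew n * bar3 (Zskew n))

section Aux

lemma T3_mul (w w' : ℤ × ℤ × ℤ) : T3 w * T3 w' = T3 (w + w') := by
  simp [T3, AddMonoidAlgebra.single_mul_single]

lemma T3_zero : T3 (0 : ℤ × ℤ × ℤ) = 1 := by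
  simp [T3, AddMonoidAlgebra.one_def]

lemma bar3_add (V W : Laurent3) : bar3 (V + W) = bar3 V + bar3 W :=
  AddMonoidAlgebra.mapDomain_add _ V W

lemma bar3_mul (V W : Laurent3) : bar3 (V * W) = bar3 V * bar3 W :=
  AddMonoidAlgebra.mapDomain_mul (negAddMonoidHom (α := ℤ × ℤ × ℤ)) V W

lemma bar3_one : bar3 (1 : Laurent3) = 1 :=
  AddMonoidAlgebra.mapDomain_one (negAddMonoidHom (α := ℤ × ℤ × ℤ))

lemma bar3_neg (V : Laurent3) : bar3 (-V) = -bar3 V :=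
  by rw [eq_neg_iff_add_eq_zero, ← bar3_add, neg_add_cancel]; exact AddMonoidAlgebra.mapDomain_zero _

lemma bar3_sub (V W : Laurent3) : bar3 (V - W) = bar3 V - bar3 W := by
  rw [sub_eq_add_neg, bar3_add, bar3_neg, sub_eq_add_neg]

lemma bar3_T3 (w : ℤ × ℤ × ℤ) : bar3 (T3 w) = T3 (-w) := by
  unfold T3; exact AddMonoidAlgebra.mapDomain_single

lemma bar3_bar3 (V : Laurent3) : bar3 (bar3 V) = V := by
  simp only [bar3, AddMonoidAlgebra.coeff_ofCoeff, ← Finsupp.mapDomain_comp, Function.comp_def, neg_neg]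
  exact congrArg AddMonoidAlgebra.ofCoeff Finsupp.mapDomain_id

/-- Sum-of-coefficients ring homomorphism. -/
noncomputable def eps : Laurent3 →ₐ[ℤ] ℤ :=
  AddMonoidAlgebra.lift ℤ ℤ (ℤ × ℤ × ℤ) 1

lemma eps_apply (V : Laurent3) : eps V = Finsupp.sum V.coeff fun _ c => c := by
  rw [eps, AddMonoidAlgebra.lift_apply]
  simp

lemma eps_T3 (w : ℤ × ℤ × ℤ) : eps (T3 w) = 1 := by
  rw [eps, T3, AddMonoidAlgebra.lift_single]
  simp

end Aux

theorem stmt11 (μ : YoungDiagram) (n : SkewPP μ) :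
    vDT n = vPlus n - bar3 (vPlus n) * T3 (1, 1, 1) ∧
    Finsupp.sum (vPlus n).coeff (fun _ c => c) = (n.size : ℤ) := by
  constructor
  · have hc1 : T3 ((-1:ℤ), (0:ℤ), (0:ℤ)) * T3 (1,0,0) = 1 := by
      rw [T3_mul]; norm_num [T3_zero]; exact T3_zero
    have hc2 : T3 ((0:ℤ), (-1:ℤ), (0:ℤ)) * T3 (0,1,0) = 1 := by
      rw [T3_mul]; norm_num [T3_zero]; exact T3_zero
    have e1 : (1 - T3 ((-1:ℤ), (0:ℤ), (0:ℤ))) * T3 (1,0,0) = -(1 - T3 (1,0,0)) := by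
      rw [sub_mul, one_mul, hc1]; ring
    have e2 : (1 - T3 ((0:ℤ), (-1:ℤ), (0:ℤ))) * T3 (0,1,0) = -(1 - T3 (0,1,0)) := by
      rw [sub_mul, one_mul, hc2]; ring
    have hsplit : T3 ((1:ℤ), (1:ℤ), (1:ℤ)) = T3 (1,0,0) * T3 (0,1,0) * T3 (0,0,1) := by
      rw [T3_mul, T3_mul]; norm_num
    have h1 : (1 - T3 ((-1:ℤ), (0:ℤ), (0:ℤ))) * (1 - T3 ((0:ℤ), (-1:ℤ), (0:ℤ))) * T3 (1, 1, 1)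
        = (1 - T3 (1, 0, 0)) * (1 - T3 (0, 1, 0)) * T3 (0, 0, 1) := by
      calc (1 - T3 ((-1:ℤ), (0:ℤ), (0:ℤ))) * (1 - T3 ((0:ℤ), (-1:ℤ), (0:ℤ))) * T3 (1,1,1)
          = ((1 - T3 ((-1:ℤ), (0:ℤ), (0:ℤ))) * T3 (1,0,0)) *
              ((1 - T3 ((0:ℤ), (-1:ℤ), (0:ℤ))) * T3 (0,1,0)) * T3 (0,0,1) := by
            rw [hsplit]; ring
        _ = _ := by rw [e1, e2]; ring
    rw [vDT, vPlus]
    rw [bar3_sub, bar3_mul, bar3_mul, bar3_add, bar3_mul, bar3_mul,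
        bar3_sub, bar3_sub, bar3_one, bar3_T3, bar3_T3, bar3_bar3, bar3_bar3]
    simp only [Prod.neg_mk, neg_zero]
    set Z := Zskew n
    set B := Zlam3 μ
    set a := T3 ((1:ℤ),(0:ℤ),(0:ℤ))
    set b := T3 ((0:ℤ),(1:ℤ),(0:ℤ))
    set c := T3 ((0:ℤ),(0:ℤ),(1:ℤ))
    calc Z - bar3 Z * T3 (1,1,1) - (1-a)*(1-b)*(-(T3 ((0:ℤ),(0:ℤ),(1:ℤ)))*(B*bar3 Z) + bar3 B * Z + (1-c)*(Z*bar3 Z))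
        = Z - (1-a)*(1-b)*(bar3 B * Z + Z * bar3 Z)
          - (bar3 Z * T3 (1,1,1)
             - ((1 - T3 ((-1:ℤ), (0:ℤ), (0:ℤ))) * (1 - T3 ((0:ℤ), (-1:ℤ), (0:ℤ))) * T3 (1,1,1))
               * (B * bar3 Z + bar3 Z * Z)) := by
          rw [h1]; ring
      _ = _ := by ring
  · have hZ : eps (Zskew n) = ∑ c ∈ n.finite_support.toFinset, (n.toFun c : ℤ) := by
      rw [Zskew, map_sum]
      refine Finset.sum_congr rfl fun c _ => ?_
      rw [map_sum]
      simp [eps_T3]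
    have hv : eps (vPlus n) = (n.size : ℤ) := by
      rw [vPlus, map_sub, map_mul, map_mul, map_sub, map_sub, map_one, eps_T3, eps_T3]
      rw [hZ]
      simp only [sub_self, zero_mul, mul_zero, sub_zero]
      rw [SkewPP.size, finsum_eq_sum _ n.finite_support]
      push_cast
      rfl
    rw [← eps_apply, hv]
end

section
/- Let V ∈ ℤ[t1^{±1},t2^{±1},t3^{±1}] be a Laurent polynomial whose coefficient at the monomial t1^a·t2^a·t3^a is zero for every integer a, and set W = V − V̄·t1·t2·t3, where V̄ is the image of V under the involution t_i ↦ t_i^{−1}. Then: W also has zero coefficient at every monomial t1^a·t2^a·t3^a; the element ê(−W) ∈ ℚ(u1,u2,u3) is defined; and, regarded as a rational function in u3 with coefficients in the field ℚ(u1,u2), ê(−W) is regular at u3 = (u1·u2)^{−1} and its value there equals (−1)^{V(1,1,1)}, where V(1,1,1) ∈ ℤ is the sum of the coefficients of V. -/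
/-!
STATEMENT 13: Let V ∈ ℤ[t1^{±1},t2^{±1},t3^{±1}] have zero coefficient at every
monomial (t1t2t3)^a, and set W = V − V̄·t1t2t3.  Then W also has zero
coefficients at all (t1t2t3)^a; ê(−W) is defined; and, viewed as a rational
function in u3 over ℚ(u1,u2), ê(−W) is regular at u3 = (u1u2)^{−1} with value
(−1)^{V(1,1,1)}.
We model ℚ(u1,u2,u3) as `RatFunc K2` with K2 = ℚ(u1,u2) the fraction field of
`MvPolynomial (Fin 2) ℚ`, u3 = `RatFunc.X`.  "Regular at a with value v" is
expressed as: the denominator (of the reduced fraction) does not vanish at a,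
and `RatFunc.eval` at a equals v.  V(1,1,1) is the sum of the coefficients of V.
-/

open Finset

/-- The field ℚ(u1,u2). -/
abbrev K2 : Type := FractionRing (MvPolynomial (Fin 2) ℚ)

/-- u1, u2 ∈ ℚ(u1,u2). -/
noncomputable def uu (i : Fin 2) : K2 :=
  algebraMap (MvPolynomial (Fin 2) ℚ) K2 (MvPolynomial.X i)

/-- ℚ(u1,u2,u3), regarded as rational functions in u3 over ℚ(u1,u2). -/
abbrev K3 : Type := RatFunc K2

/-- u1 ∈ K3. -/
noncomputable def U1 : K3 := RatFunc.C (uu 0)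

/-- u2 ∈ K3. -/
noncomputable def U2 : K3 := RatFunc.C (uu 1)

/-- u3 ∈ K3. -/
noncomputable def U3 : K3 := RatFunc.X

/-- The symmetrised bracket [t^w] = u^w − u^{−w}, where t_i = u_i². -/
noncomputable def br3 (w : ℤ × ℤ × ℤ) : K3 :=
  U1 ^ w.1 * U2 ^ w.2.1 * U3 ^ w.2.2 - U1 ^ (-w.1) * U2 ^ (-w.2.1) * U3 ^ (-w.2.2)

/-- ê(V) = ∏_{w ∈ supp V} [t^w]^{c_w}; in particular `ehat3 (-V) = (ehat3 V)⁻¹`. -/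
noncomputable def ehat3 (V : Laurent3) : K3 :=
  ∏ w ∈ V.coeff.support, br3 w ^ (V.coeff w)

/-! ### Auxiliary material -/

lemma uu_ne (i : Fin 2) : uu i ≠ 0 := by
  simp only [uu, ne_eq, map_eq_zero_iff _ (IsFractionRing.injective _ _)]
  exact MvPolynomial.X_ne_zero i

lemma indep {m n : ℤ} (h : uu 0 ^ m * uu 1 ^ n = 1) : m = 0 ∧ n = 0 := by
  have hx := uu_ne 0
  have hy := uu_ne 1
  have hsplit : ∀ (x : K2) (hx : x ≠ 0) (m : ℤ), x ^ m = x ^ m.toNat / x ^ (-m).toNat := by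
    intro x hx m
    rw [eq_div_iff (pow_ne_zero _ hx), ← zpow_natCast x, ← zpow_natCast x, ← zpow_add₀ hx]
    congr 1; omega
  rw [hsplit _ hx m, hsplit _ hy n] at h
  have h2 : uu 0 ^ m.toNat * uu 1 ^ n.toNat = uu 0 ^ (-m).toNat * uu 1 ^ (-n).toNat := by
    field_simp at h; linear_combination h
  have h3 : (MvPolynomial.X 0 ^ m.toNat * MvPolynomial.X 1 ^ n.toNat : MvPolynomial (Fin 2) ℚ)
      = MvPolynomial.X 0 ^ (-m).toNat * MvPolynomial.X 1 ^ (-n).toNat := by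
    apply IsFractionRing.injective (MvPolynomial (Fin 2) ℚ) K2
    simpa only [map_mul, map_pow, uu] using h2
  have e1 := congrArg (MvPolynomial.eval (fun i : Fin 2 => if i = 0 then (2:ℚ) else 1)) h3
  have e2 := congrArg (MvPolynomial.eval (fun i : Fin 2 => if i = 1 then (2:ℚ) else 1)) h3
  simp [MvPolynomial.eval_X] at e1 e2
  omega

/-- `f` is regular at `a` with value `v`. -/
def Reg (a v : K2) (f : K3) : Prop :=
  ∃ p q : Polynomial K2, Polynomial.eval a q ≠ 0 ∧
    f * algebraMap (Polynomial K2) K3 q = algebraMap (Polynomial K2) K3 p ∧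
    Polynomial.eval a p = v * Polynomial.eval a q

lemma reg_algebraMap (a : K2) (p : Polynomial K2) :
    Reg a (Polynomial.eval a p) (algebraMap (Polynomial K2) K3 p) :=
  ⟨p, 1, by simp, by simp, by simp⟩

lemma reg_one (a : K2) : Reg a 1 1 := by simpa using reg_algebraMap a 1

lemma reg_mul {a v w : K2} {f g : K3} (hf : Reg a v f) (hg : Reg a w g) :
    Reg a (v * w) (f * g) := by
  obtain ⟨p, q, hq, hfq, hp⟩ := hf
  obtain ⟨p', q', hq', hfq', hp'⟩ := hg
  refine ⟨p * p', q * q', by simp [hq, hq'], ?_, by simp [hp, hp']; ring⟩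
  rw [(algebraMap (Polynomial K2) K3).map_mul, (algebraMap (Polynomial K2) K3).map_mul]
  calc f * g * (algebraMap (Polynomial K2) K3 q * algebraMap (Polynomial K2) K3 q')
      = (f * algebraMap (Polynomial K2) K3 q) * (g * algebraMap (Polynomial K2) K3 q') := by ring
    _ = _ := by rw [hfq, hfq']

lemma reg_add {a v w : K2} {f g : K3} (hf : Reg a v f) (hg : Reg a w g) :
    Reg a (v + w) (f + g) := by
  obtain ⟨p, q, hq, hfq, hp⟩ := hf
  obtain ⟨p', q', hq', hfq', hp'⟩ := hg
  refine ⟨p * q' + p' * q, q * q', by simp [hq, hq'], ?_, by simp [hp, hp']; ring⟩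
  rw [(algebraMap (Polynomial K2) K3).map_add, (algebraMap (Polynomial K2) K3).map_mul,
    (algebraMap (Polynomial K2) K3).map_mul, (algebraMap (Polynomial K2) K3).map_mul]
  calc (f + g) * (algebraMap (Polynomial K2) K3 q * algebraMap (Polynomial K2) K3 q')
      = (f * algebraMap (Polynomial K2) K3 q) * algebraMap (Polynomial K2) K3 q'
        + (g * algebraMap (Polynomial K2) K3 q') * algebraMap (Polynomial K2) K3 q := by ring
    _ = _ := by rw [hfq, hfq']

lemma reg_neg {a v : K2} {f : K3} (hf : Reg a v f) : Reg a (-v) (-f) := by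
  obtain ⟨p, q, hq, hfq, hp⟩ := hf
  exact ⟨-p, q, hq, by rw [(algebraMap (Polynomial K2) K3).map_neg, neg_mul, hfq], by simp [hp]⟩

lemma reg_sub {a v w : K2} {f g : K3} (hf : Reg a v f) (hg : Reg a w g) :
    Reg a (v - w) (f - g) := by
  simpa [sub_eq_add_neg] using reg_add hf (reg_neg hg)

lemma reg_inv {a v : K2} {f : K3} (hv : v ≠ 0) (hf : Reg a v f) : Reg a v⁻¹ f⁻¹ := by
  obtain ⟨p, q, hq, hfq, hp⟩ := hf
  have hpe : Polynomial.eval a p ≠ 0 := by rw [hp]; exact mul_ne_zero hv hq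
  have hpz : p ≠ 0 := fun h => hpe (by simp [h])
  have hfz : f ≠ 0 := by
    intro h
    rw [h, zero_mul] at hfq
    exact RatFunc.algebraMap_ne_zero hpz hfq.symm
  refine ⟨q, p, hpe, ?_, by rw [hp]; field_simp⟩
  have h2 := congrArg (fun z => f⁻¹ * z) hfq
  rw [← mul_assoc, inv_mul_cancel₀ hfz, one_mul] at h2
  exact h2.symm

lemma reg_pow {a v : K2} {f : K3} (hf : Reg a v f) (n : ℕ) : Reg a (v ^ n) (f ^ n) := by
  induction n with
  | zero => simpa using reg_one a
  | succ n ih => rw [pow_succ, pow_succ]; exact reg_mul ih hf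

lemma reg_zpow {a v : K2} {f : K3} (hv : v ≠ 0) (hf : Reg a v f) (n : ℤ) :
    Reg a (v ^ n) (f ^ n) := by
  cases n with
  | ofNat n => simpa [zpow_natCast] using reg_pow hf n
  | negSucc n =>
      rw [zpow_negSucc, zpow_negSucc]
      exact reg_inv (pow_ne_zero _ hv) (reg_pow hf (n + 1))

lemma reg_prod {a : K2} {ι : Type*} (s : Finset ι) (v : ι → K2) (f : ι → K3)
    (h : ∀ i ∈ s, Reg a (v i) (f i)) :
    Reg a (∏ i ∈ s, v i) (∏ i ∈ s, f i) := by
  classical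
  induction s using Finset.induction_on with
  | empty => simpa using reg_one a
  | insert b t hnot ih =>
      rw [Finset.prod_insert hnot, Finset.prod_insert hnot]
      exact reg_mul (h b (Finset.mem_insert_self b t))
        (ih fun i hi => h i (Finset.mem_insert_of_mem hi))

lemma reg_eval {a v : K2} {f : K3} (hf : Reg a v f) :
    Polynomial.eval a f.denom ≠ 0 ∧ RatFunc.eval (RingHom.id K2) a f = v := by
  obtain ⟨p, q, hq, hfq, hp⟩ := hf
  have hqz : q ≠ 0 := fun h => hq (by simp [h])
  have hfdiv : f = algebraMap (Polynomial K2) K3 p / algebraMap (Polynomial K2) K3 q := by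
    rw [eq_div_iff (RatFunc.algebraMap_ne_zero hqz)]; exact hfq
  have hdvd : f.denom ∣ q := (RatFunc.denom_dvd hqz).mpr ⟨p, hfdiv⟩
  obtain ⟨r, hr⟩ := hdvd
  have hde : Polynomial.eval a f.denom ≠ 0 := by
    intro h
    apply hq
    rw [hr, Polynomial.eval_mul, h, zero_mul]
  refine ⟨hde, ?_⟩
  have hnum : f.num * q = f.denom * p := by
    apply RatFunc.algebraMap_injective
    rw [(algebraMap (Polynomial K2) (RatFunc K2)).map_mul,
      (algebraMap (Polynomial K2) (RatFunc K2)).map_mul]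
    have h1 := RatFunc.num_div_denom f
    have hdz : algebraMap (Polynomial K2) K3 f.denom ≠ 0 :=
      RatFunc.algebraMap_ne_zero f.denom_ne_zero
    have h2 : algebraMap (Polynomial K2) K3 f.num / algebraMap (Polynomial K2) K3 f.denom
        * algebraMap (Polynomial K2) K3 q = algebraMap (Polynomial K2) K3 p := by
      rw [h1]; exact hfq
    rw [div_mul_eq_mul_div, div_eq_iff hdz] at h2
    rw [h2]; ring
  have heval : Polynomial.eval a f.num * Polynomial.eval a q
      = Polynomial.eval a f.denom * Polynomial.eval a p := by
    rw [← Polynomial.eval_mul, ← Polynomial.eval_mul, hnum]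
  have heq : RatFunc.eval (RingHom.id K2) a f
      = Polynomial.eval a f.num / Polynomial.eval a f.denom := rfl
  rw [heq, div_eq_iff hde]
  apply mul_right_cancel₀ hq
  rw [heval, hp]; ring

/-- the point u3 = (u1 u2)⁻¹ -/
noncomputable def aa : K2 := (uu 0 * uu 1)⁻¹

lemma aa_ne : aa ≠ 0 := by
  simp only [aa, ne_eq, inv_eq_zero, mul_eq_zero, not_or]
  exact ⟨uu_ne 0, uu_ne 1⟩

/-- value of br3 w at the point -/
noncomputable def nf (w : ℤ × ℤ × ℤ) : K2 :=
  uu 0 ^ (w.1 - w.2.2) * uu 1 ^ (w.2.1 - w.2.2)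
    - uu 0 ^ (w.2.2 - w.1) * uu 1 ^ (w.2.2 - w.2.1)

lemma aux_val (m n k : ℤ) : uu 0 ^ m * uu 1 ^ n * aa ^ k = uu 0 ^ (m - k) * uu 1 ^ (n - k) := by
  have h : aa ^ k = uu 0 ^ (-k) * uu 1 ^ (-k) := by
    rw [aa, inv_zpow, mul_zpow, mul_inv, ← zpow_neg, ← zpow_neg]
  rw [h, sub_eq_add_neg, sub_eq_add_neg, zpow_add₀ (uu_ne 0), zpow_add₀ (uu_ne 1)]
  ring

lemma reg_C (c : K2) : Reg aa c (RatFunc.C c) := by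
  simpa using reg_algebraMap aa (Polynomial.C c)

lemma reg_X : Reg aa aa (RatFunc.X : K3) := by
  simpa using reg_algebraMap aa (Polynomial.X)

lemma reg_br (w : ℤ × ℤ × ℤ) : Reg aa (nf w) (br3 w) := by
  have h1 : ∀ m : ℤ, Reg aa (uu 0 ^ m) (U1 ^ m) := fun m => reg_zpow (uu_ne 0) (reg_C (uu 0)) m
  have h2 : ∀ m : ℤ, Reg aa (uu 1 ^ m) (U2 ^ m) := fun m => reg_zpow (uu_ne 1) (reg_C (uu 1)) m
  have h3 : ∀ m : ℤ, Reg aa (aa ^ m) (U3 ^ m) := fun m => reg_zpow aa_ne reg_X m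
  have := reg_sub (reg_mul (reg_mul (h1 w.1) (h2 w.2.1)) (h3 w.2.2))
    (reg_mul (reg_mul (h1 (-w.1)) (h2 (-w.2.1))) (h3 (-w.2.2)))
  rw [br3, nf] at *
  rw [aux_val, aux_val] at this
  simpa [neg_sub, sub_neg_eq_add, show ∀ a b : ℤ, -a - -b = b - a from by intros; ring] using this

lemma nf_ne {w : ℤ × ℤ × ℤ} (hw : ¬(w.1 = w.2.2 ∧ w.2.1 = w.2.2)) : nf w ≠ 0 := by
  intro h
  rw [nf, sub_eq_zero] at h
  have h2 : uu 0 ^ (2 * (w.1 - w.2.2)) * uu 1 ^ (2 * (w.2.1 - w.2.2)) = 1 := by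
    have : uu 0 ^ (w.1 - w.2.2) * uu 1 ^ (w.2.1 - w.2.2)
        * (uu 0 ^ (w.1 - w.2.2) * uu 1 ^ (w.2.1 - w.2.2))
        = uu 0 ^ (w.1 - w.2.2) * uu 1 ^ (w.2.1 - w.2.2)
        * (uu 0 ^ (w.2.2 - w.1) * uu 1 ^ (w.2.2 - w.2.1)) := by rw [← h]
    calc uu 0 ^ (2 * (w.1 - w.2.2)) * uu 1 ^ (2 * (w.2.1 - w.2.2))
        = uu 0 ^ (w.1 - w.2.2) * uu 1 ^ (w.2.1 - w.2.2)
        * (uu 0 ^ (w.2.2 - w.1) * uu 1 ^ (w.2.2 - w.2.1)) := by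
          rw [← this, two_mul (w.1 - w.2.2), two_mul (w.2.1 - w.2.2),
            zpow_add₀ (uu_ne 0), zpow_add₀ (uu_ne 1)]
          ring
      _ = uu 0 ^ ((w.1 - w.2.2) + (w.2.2 - w.1)) * uu 1 ^ ((w.2.1 - w.2.2) + (w.2.2 - w.2.1)) := by
          rw [zpow_add₀ (uu_ne 0), zpow_add₀ (uu_ne 1)]; ring
      _ = 1 := by simp
  obtain ⟨hm, hn⟩ := indep h2
  exact hw ⟨by omega, by omega⟩

/-- the involution w ↦ (1,1,1) − w -/
def sig (w : ℤ × ℤ × ℤ) : ℤ × ℤ × ℤ := (1 - w.1, 1 - w.2.1, 1 - w.2.2)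

lemma sig_sig (w : ℤ × ℤ × ℤ) : sig (sig w) = w := by
  rcases w with ⟨a, b, c⟩
  simp [sig]

lemma sig_ne (w : ℤ × ℤ × ℤ) : sig w ≠ w := by
  rcases w with ⟨a, b, c⟩
  simp only [sig, ne_eq, Prod.mk.injEq, not_and]
  intro h; omega

lemma nf_sig (w : ℤ × ℤ × ℤ) : nf (sig w) = - nf w := by
  rw [nf, nf, sig]
  simp only
  rw [show (1 - w.1) - (1 - w.2.2) = w.2.2 - w.1 from by ring,
    show (1 - w.2.1) - (1 - w.2.2) = w.2.2 - w.2.1 from by ring,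
    show (1 - w.2.2) - (1 - w.1) = w.1 - w.2.2 from by ring,
    show (1 - w.2.2) - (1 - w.2.1) = w.2.1 - w.2.2 from by ring]
  exact (neg_sub _ _).symm

lemma prod_zpow_sum {ι : Type*} {x : K2} (hx : x ≠ 0) (s : Finset ι) (g : ι → ℤ) :
    ∏ i ∈ s, x ^ g i = x ^ (∑ i ∈ s, g i) := by
  classical
  induction s using Finset.induction_on with
  | empty => simp
  | insert b t hnot ih =>
      rw [Finset.prod_insert hnot, Finset.sum_insert hnot, zpow_add₀ hx, ih]

lemma W_apply (V : Laurent3) (w : ℤ × ℤ × ℤ) :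
    (V - bar3 V * T3 (1, 1, 1)).coeff w = V.coeff w - V.coeff (sig w) := by
  rw [AddMonoidAlgebra.coeff_sub, Finsupp.sub_apply]
  congr 1
  rw [T3, bar3]
  rw [AddMonoidAlgebra.coeff_mul_single_apply]
  rw [mul_one, AddMonoidAlgebra.coeff_ofCoeff]
  have h2 : w - ((1:ℤ), (1:ℤ), (1:ℤ)) = -(sig w) := by
    rcases w with ⟨a, b, c⟩
    simp only [sig, Prod.ext_iff, Prod.mk_sub_mk, Prod.neg_mk]
    refine ⟨by ring, by ring, by ring⟩
  have hinj : Function.Injective (fun w : ℤ × ℤ × ℤ => -w) := fun x y h => neg_injective h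
  have h3 := Finsupp.mapDomain_apply hinj V.coeff (sig w)
  rw [← sub_eq_add_neg, h2, h3]

theorem stmt13 (V : Laurent3) (hV : ∀ a : ℤ, V.coeff (a, a, a) = 0) :
    (∀ a : ℤ, (V - bar3 V * T3 (1, 1, 1)).coeff (a, a, a) = 0) ∧
    Polynomial.eval ((uu 0 * uu 1)⁻¹)
        (ehat3 (-(V - bar3 V * T3 (1, 1, 1)))).denom ≠ 0 ∧
    RatFunc.eval (RingHom.id K2) ((uu 0 * uu 1)⁻¹)
        (ehat3 (-(V - bar3 V * T3 (1, 1, 1))))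
      = (-1 : K2) ^ (Finsupp.sum V.coeff fun _ c => c) := by
  classical
  set W := V - bar3 V * T3 (1, 1, 1) with hW
  have hdiag : ∀ w : ℤ × ℤ × ℤ, (w.1 = w.2.2 ∧ w.2.1 = w.2.2) → V.coeff w = 0 := by
    rintro ⟨a, b, c⟩ ⟨h1, h2⟩
    simp only at h1 h2
    subst h1; subst h2
    exact hV _
  have part1 : ∀ a : ℤ, W.coeff (a, a, a) = 0 := by
    intro a
    rw [W_apply]
    have h1 : V.coeff ((a:ℤ), (a:ℤ), (a:ℤ)) = 0 := hV a
    have h2 : V.coeff (sig (a, a, a)) = 0 := hV (1 - a)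
    rw [h1, h2, sub_zero]
  -- the index set
  set s : Finset (ℤ × ℤ × ℤ) := V.coeff.support ∪ V.coeff.support.image sig with hs
  have hs_sig : ∀ w ∈ s, sig w ∈ s := by
    intro w hw
    rcases Finset.mem_union.mp hw with h | h
    · exact Finset.mem_union_right _ (Finset.mem_image_of_mem _ h)
    · obtain ⟨w', hw', rfl⟩ := Finset.mem_image.mp h
      rw [sig_sig]
      exact Finset.mem_union_left _ hw'
  have hs_nd : ∀ w ∈ s, ¬(w.1 = w.2.2 ∧ w.2.1 = w.2.2) := by
    intro w hw hd
    rcases Finset.mem_union.mp hw with h | h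
    · exact Finsupp.mem_support_iff.mp h (hdiag w hd)
    · obtain ⟨w', hw', rfl⟩ := Finset.mem_image.mp h
      apply Finsupp.mem_support_iff.mp hw'
      apply hdiag
      rcases w' with ⟨a, b, c⟩
      simp only [sig] at hd
      simp only
      omega
  have hWs : W.coeff.support ⊆ s := by
    intro w hw
    have hWw : W.coeff w ≠ 0 := Finsupp.mem_support_iff.mp hw
    rw [W_apply] at hWw
    by_cases h : V.coeff w = 0
    · have : V.coeff (sig w) ≠ 0 := by intro h2; apply hWw; rw [h, h2, sub_zero]
      have : sig w ∈ V.coeff.support := Finsupp.mem_support_iff.mpr this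
      have := Finset.mem_image_of_mem sig this
      rw [sig_sig] at this
      exact Finset.mem_union_right _ this
    · exact Finset.mem_union_left _ (Finsupp.mem_support_iff.mpr h)
  -- rewrite ehat3 (-W) as a product over s
  have hprod : ehat3 (-W) = ∏ w ∈ s, br3 w ^ (-(W.coeff w)) := by
    rw [ehat3]
    rw [AddMonoidAlgebra.coeff_neg, Finsupp.support_neg]
    have h1 : ∀ w ∈ W.coeff.support, br3 w ^ ((-W.coeff) w) = br3 w ^ (-(W.coeff w)) := by
      intro w _; rw [Finsupp.neg_apply]
    rw [Finset.prod_congr rfl h1]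
    apply Finset.prod_subset hWs
    intro w _ hnw
    rw [Finsupp.notMem_support_iff.mp hnw, neg_zero, zpow_zero]
  -- regularity
  have hreg : Reg aa (∏ w ∈ s, nf w ^ (-(W.coeff w))) (∏ w ∈ s, br3 w ^ (-(W.coeff w))) := by
    apply reg_prod
    intro w hw
    exact reg_zpow (nf_ne (hs_nd w hw)) (reg_br w) _
  -- the value of the product
  have hWsig : ∀ w : ℤ × ℤ × ℤ, W.coeff (sig w) = -(W.coeff w) := by
    intro w
    rw [W_apply, W_apply, sig_sig]
    ring
  have hm1 : (-1 : K2) ≠ 0 := by norm_num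
  have hinv : ∏ w ∈ s, (nf w ^ (-(W.coeff w)) * (-1 : K2) ^ (V.coeff w)) = 1 := by
    apply Finset.prod_involution (fun w _ => sig w)
    · intro w hw
      have hnf := nf_ne (hs_nd w hw)
      rw [nf_sig, hWsig]
      rw [neg_neg]
      have hneg : (-nf w) ^ (W.coeff w) = (-1 : K2) ^ (W.coeff w) * nf w ^ (W.coeff w) := by
        rw [show -nf w = (-1 : K2) * nf w from by ring, mul_zpow]
      rw [hneg]
      have hcomb : nf w ^ (-(W.coeff w)) * nf w ^ (W.coeff w) = 1 := by
        rw [← zpow_add₀ hnf]; simp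
      calc nf w ^ (-(W.coeff w)) * (-1 : K2) ^ (V.coeff w)
            * ((-1 : K2) ^ (W.coeff w) * nf w ^ (W.coeff w) * (-1 : K2) ^ (V.coeff (sig w)))
          = (nf w ^ (-(W.coeff w)) * nf w ^ (W.coeff w))
            * ((-1 : K2) ^ (V.coeff w) * (-1 : K2) ^ (W.coeff w) * (-1 : K2) ^ (V.coeff (sig w))) := by ring
        _ = (-1 : K2) ^ (V.coeff w + W.coeff w + V.coeff (sig w)) := by
            rw [hcomb, one_mul, zpow_add₀ hm1, zpow_add₀ hm1]
        _ = (-1 : K2) ^ (2 * V.coeff w) := by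
            congr 1
            rw [W_apply]
            ring
        _ = 1 := by
            rw [zpow_mul]
            norm_num
    · intro w _ _
      exact sig_ne w
    · intro w hw
      exact hs_sig w hw
    · intro w _
      exact sig_sig w
  have hsum_eq : ∑ w ∈ s, V.coeff w = Finsupp.sum V.coeff fun _ c => c := by
    rw [Finsupp.sum]
    symm
    apply Finset.sum_subset (Finset.subset_union_left)
    intro w _ hnw
    exact Finsupp.notMem_support_iff.mp hnw
  have hval : ∏ w ∈ s, nf w ^ (-(W.coeff w)) = (-1 : K2) ^ (Finsupp.sum V.coeff fun _ c => c) := by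
    rw [Finset.prod_mul_distrib] at hinv
    rw [prod_zpow_sum hm1, hsum_eq] at hinv
    set N : ℤ := Finsupp.sum V.coeff fun _ c => c
    have h2 : ((-1 : K2) ^ N)⁻¹ = (-1 : K2) ^ N := by
      rw [← inv_zpow, inv_neg, inv_one]
    calc ∏ w ∈ s, nf w ^ (-(W.coeff w))
        = (∏ w ∈ s, nf w ^ (-(W.coeff w))) * ((-1 : K2) ^ N * ((-1 : K2) ^ N)⁻¹) := by
          rw [mul_inv_cancel₀ (zpow_ne_zero _ hm1), mul_one]
      _ = ((∏ w ∈ s, nf w ^ (-(W.coeff w))) * (-1 : K2) ^ N) * ((-1 : K2) ^ N)⁻¹ := by ring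
      _ = ((-1 : K2) ^ N)⁻¹ := by rw [hinv, one_mul]
      _ = (-1 : K2) ^ N := h2
  refine ⟨part1, ?_, ?_⟩
  · rw [hprod]
    have := (reg_eval (hval ▸ hreg)).1
    simpa [aa] using this
  · rw [hprod]
    have := (reg_eval (hval ▸ hreg)).2
    simpa [aa] using this
end

section
/- Let λ be a Young diagram and κ > 0 a real number. For a positive real z set [z] = z^{1/2} − z^{−1/2}, and for L > 0 set t1 = L·κ^{1/2}, t2 = L^{−1}·κ^{1/2} (positive reals). Then: (i) lim_{L→∞} ∏_{□∈λ} ( [t1^{−ℓ(□)}·t2^{a(□)+1}] / [t1^{ℓ(□)+1}·t2^{−a(□)}] )^{a(□)−ℓ(□)} = (−κ^{1/2})^{n(λ)−n(λ̄)}, and (ii) lim_{L→∞} ∏_{□∈λ} ( [t1^{−ℓ(□)}·t2^{a(□)+1}] / [t1^{ℓ(□)+1}·t2^{−a(□)}] )^{2a(□)+1} = (−κ^{−1/2})^{2n(λ̄)+|λ|}. Here the brackets are nonzero for L sufficiently large, and integer powers of the (possibly negative) nonzero real ratio and of −κ^{±1/2} are taken in ℝ∖{0}. -/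
/-!
STATEMENT 16: refined limit of the edge factors.  For a Young diagram λ and
κ > 0, with [z] = √z − 1/√z, t1 = L√κ, t2 = L^{−1}√κ:
(i)  lim_{L→∞} ∏_{□∈λ} ([t1^{−ℓ}t2^{a+1}]/[t1^{ℓ+1}t2^{−a}])^{a−ℓ}
       = (−√κ)^{n(λ)−n(λ̄)};
(ii) lim_{L→∞} ∏_{□∈λ} ([t1^{−ℓ}t2^{a+1}]/[t1^{ℓ+1}t2^{−a}])^{2a+1}
       = (−κ^{−1/2})^{2n(λ̄)+|λ|};
and the brackets are nonzero for all sufficiently large L.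
Here n(ν) = Σ_{i≥0} i·ν_i (a finite sum, via `finsum`), λ̄ is the transpose, and
integer powers of nonzero reals are `zpow`.
-/

open Finset Filter

/-- n(λ) = Σ_{i≥0} i·λ_i. -/
noncomputable def nOf (μ : YoungDiagram) : ℕ := ∑ᶠ i : ℕ, i * μ.rowLen i

/-- The bracket [z] = √z − 1/√z for a (positive) real z. -/
noncomputable def brR (z : ℝ) : ℝ := Real.sqrt z - (Real.sqrt z)⁻¹

/-- The edge ratio [t1^{−ℓ(□)}t2^{a(□)+1}] / [t1^{ℓ(□)+1}t2^{−a(□)}] at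
t1 = L√κ, t2 = L^{−1}√κ. -/
noncomputable def edgeRatio (κ : ℝ) (μ : YoungDiagram) (c : ℕ × ℕ) (L : ℝ) : ℝ :=
  brR ((L * Real.sqrt κ) ^ (-(legLength μ c : ℤ)) *
        (L⁻¹ * Real.sqrt κ) ^ ((armLength μ c : ℤ) + 1)) /
    brR ((L * Real.sqrt κ) ^ ((legLength μ c : ℤ) + 1) *
        (L⁻¹ * Real.sqrt κ) ^ (-(armLength μ c : ℤ)))

/-! ### Combinatorial lemmas -/

lemma brR_eq (z : ℝ) : brR z = (z - 1) / Real.sqrt z := by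
  rw [brR, sub_div, Real.div_sqrt, one_div]

lemma sum_fst_eq_nOf (μ : YoungDiagram) : ∑ c ∈ μ.cells, c.1 = nOf μ := by
  classical
  set N := μ.colLen 0 with hN
  set M := μ.rowLen 0 with hM
  have hcells : μ.cells = (Finset.range N ×ˢ Finset.range M).filter (fun c => c ∈ μ) := by
    ext c
    simp only [Finset.mem_filter, Finset.mem_product, Finset.mem_range, YoungDiagram.mem_cells]
    refine ⟨fun h => ⟨⟨?_, ?_⟩, h⟩, fun h => h.2⟩
    · rw [hN, ← YoungDiagram.mem_iff_lt_colLen]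
      exact μ.up_left_mem le_rfl (Nat.zero_le _) (by simpa using h)
    · rw [hM, ← YoungDiagram.mem_iff_lt_rowLen]
      exact μ.up_left_mem (Nat.zero_le _) le_rfl (by simpa using h)
  have inner : ∀ i : ℕ, ∑ j ∈ Finset.range M, (if (i, j) ∈ μ then i else 0) = i * μ.rowLen i := by
    intro i
    have hle : μ.rowLen i ≤ M := μ.rowLen_anti 0 i (Nat.zero_le i)
    have hfil : (Finset.range M).filter (fun j => (i, j) ∈ μ) = Finset.range (μ.rowLen i) := by
      ext j
      simp only [Finset.mem_filter, Finset.mem_range, YoungDiagram.mem_iff_lt_rowLen]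
      omega
    rw [← Finset.sum_filter, hfil, Finset.sum_const, Finset.card_range, smul_eq_mul, mul_comm]
  have hnof : nOf μ = ∑ i ∈ Finset.range N, i * μ.rowLen i := by
    apply finsum_eq_sum_of_support_subset
    intro i hi
    simp only [Function.mem_support, ne_eq, mul_eq_zero, not_or] at hi
    simp only [Finset.coe_range, Set.mem_Iio]
    have : (i, 0) ∈ μ := YoungDiagram.mem_iff_lt_rowLen.mpr (Nat.pos_of_ne_zero hi.2)
    rwa [YoungDiagram.mem_iff_lt_colLen] at this
  rw [hcells, Finset.sum_filter, Finset.sum_product, hnof]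
  exact Finset.sum_congr rfl fun i _ => inner i

lemma transpose_cells (μ : YoungDiagram) :
    μ.transpose.cells = μ.cells.image Prod.swap := by
  ext c
  simp only [YoungDiagram.mem_cells, YoungDiagram.mem_transpose, Finset.mem_image]
  constructor
  · intro h; exact ⟨c.swap, (YoungDiagram.mem_cells _).mpr h, Prod.swap_swap c⟩
  · rintro ⟨d, hd, rfl⟩; simpa using (YoungDiagram.mem_cells _).mp hd

lemma sum_snd_eq_nOf_transpose (μ : YoungDiagram) :
    ∑ c ∈ μ.cells, c.2 = nOf μ.transpose := by
  rw [← sum_fst_eq_nOf, transpose_cells,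
    Finset.sum_image (by intro a _ b _ h; exact Prod.swap_injective h)]
  rfl

lemma sum_leg (μ : YoungDiagram) : ∑ c ∈ μ.cells, legLength μ c = nOf μ := by
  classical
  rw [← sum_fst_eq_nOf]
  have key : ∀ d ∈ μ.cells, (μ.cells.filter fun c => d.2 = c.2 ∧ c.1 < d.1).card = d.1 := by
    intro d hd
    have himg : (μ.cells.filter fun c => d.2 = c.2 ∧ c.1 < d.1)
        = (Finset.range d.1).image (fun i => (i, d.2)) := by
      ext c
      simp only [Finset.mem_filter, Finset.mem_image, Finset.mem_range, YoungDiagram.mem_cells]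
      constructor
      · rintro ⟨hc, h2, h1⟩
        exact ⟨c.1, h1, by rw [h2]⟩
      · rintro ⟨i, hi, rfl⟩
        exact ⟨μ.up_left_mem hi.le le_rfl (by simpa using (YoungDiagram.mem_cells d).mp hd),
          rfl, hi⟩
    rw [himg, Finset.card_image_of_injective _ (fun a b h => by simpa using h),
      Finset.card_range]
  calc ∑ c ∈ μ.cells, legLength μ c
      = ∑ c ∈ μ.cells, ∑ d ∈ μ.cells, (if d.2 = c.2 ∧ c.1 < d.1 then 1 else 0) :=
        Finset.sum_congr rfl fun c _ => by rw [legLength, Finset.card_filter]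
    _ = ∑ d ∈ μ.cells, ∑ c ∈ μ.cells, (if d.2 = c.2 ∧ c.1 < d.1 then 1 else 0) :=
        Finset.sum_comm
    _ = ∑ d ∈ μ.cells, d.1 := Finset.sum_congr rfl fun d hd => by
        rw [← Finset.card_filter]; exact key d hd

lemma arm_eq_leg_transpose (μ : YoungDiagram) (c : ℕ × ℕ) :
    armLength μ c = legLength μ.transpose c.swap := by
  unfold armLength legLength
  have himg : μ.transpose.cells.filter (fun d => d.2 = c.swap.2 ∧ c.swap.1 < d.1)
      = (μ.cells.filter fun d => d.1 = c.1 ∧ c.2 < d.2).image Prod.swap := by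
    ext e
    simp only [Finset.mem_filter, Finset.mem_image, YoungDiagram.mem_cells,
      YoungDiagram.mem_transpose, Prod.fst_swap, Prod.snd_swap]
    constructor
    · rintro ⟨he, h2, h1⟩
      exact ⟨e.swap, ⟨he, h2, h1⟩, Prod.swap_swap e⟩
    · rintro ⟨d, ⟨hd, h1, h2⟩, rfl⟩
      exact ⟨by simpa using hd, by simpa using h1, by simpa using h2⟩
  rw [himg, Finset.card_image_of_injective _ Prod.swap_injective]

lemma sum_arm (μ : YoungDiagram) : ∑ c ∈ μ.cells, armLength μ c = nOf μ.transpose := by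
  classical
  calc ∑ c ∈ μ.cells, armLength μ c
      = ∑ c ∈ μ.cells, legLength μ.transpose c.swap :=
        Finset.sum_congr rfl fun c _ => arm_eq_leg_transpose μ c
    _ = ∑ c ∈ μ.transpose.cells, legLength μ.transpose c := by
        rw [transpose_cells, Finset.sum_image (by intro a _ b _ h; exact Prod.swap_injective h)]
    _ = nOf μ.transpose := sum_leg μ.transpose

lemma prod_zpow_const {α : Type*} (s : Finset α) (x : ℝ) (hx : x ≠ 0) (f : α → ℤ) :
    ∏ c ∈ s, x ^ f c = x ^ (∑ c ∈ s, f c) := by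
  classical
  induction s using Finset.induction with
  | empty => simp
  | insert _ _ h ih => rw [Finset.prod_insert h, Finset.sum_insert h, zpow_add₀ hx, ih]

/-! ### Analytic lemmas -/

lemma cell_key (μ : YoungDiagram) (κ : ℝ) (hκ : 0 < κ) (c : ℕ × ℕ) :
    (∀ᶠ L : ℝ in atTop,
      brR ((L * Real.sqrt κ) ^ (-(legLength μ c : ℤ)) *
            (L⁻¹ * Real.sqrt κ) ^ ((armLength μ c : ℤ) + 1)) ≠ 0 ∧
      brR ((L * Real.sqrt κ) ^ ((legLength μ c : ℤ) + 1) *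
            (L⁻¹ * Real.sqrt κ) ^ (-(armLength μ c : ℤ))) ≠ 0) ∧
    Filter.Tendsto (edgeRatio κ μ c) atTop (nhds (-(Real.sqrt κ)⁻¹)) := by
  set s : ℝ := Real.sqrt κ with hs
  have hs0 : 0 < s := Real.sqrt_pos.mpr hκ
  have hss : s * s = κ := Real.mul_self_sqrt hκ.le
  set a : ℤ := (armLength μ c : ℤ) with ha
  set l : ℤ := (legLength μ c : ℤ) with hl
  have ha0 : 0 ≤ a := Int.natCast_nonneg _
  have hl0 : 0 ≤ l := Int.natCast_nonneg _
  set z : ℝ → ℝ := fun L => (L * s) ^ (-l) * (L⁻¹ * s) ^ (a + 1) with hz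
  -- the two bracket arguments multiply to κ
  have hmul : ∀ L : ℝ, L ≠ 0 →
      z L * ((L * s) ^ (l + 1) * (L⁻¹ * s) ^ (-a)) = κ := by
    intro L hL
    have h1 : (L : ℝ) * s ≠ 0 := mul_ne_zero hL hs0.ne'
    have h2 : (L : ℝ)⁻¹ * s ≠ 0 := mul_ne_zero (inv_ne_zero hL) hs0.ne'
    rw [hz]
    rw [mul_mul_mul_comm, ← zpow_add₀ h1, ← zpow_add₀ h2]
    have e1 : -l + (l + 1) = 1 := by ring
    have e2 : a + 1 + -a = 1 := by ring
    rw [e1, e2, zpow_one, zpow_one]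
    rw [mul_mul_mul_comm, mul_inv_cancel₀ hL, one_mul]
    exact hss
  -- z L > 0 for L > 0
  have hzpos : ∀ L : ℝ, 0 < L → 0 < z L := by
    intro L hL
    have h1 : (0:ℝ) < L * s := mul_pos hL hs0
    have h2 : (0:ℝ) < L⁻¹ * s := mul_pos (inv_pos.mpr hL) hs0
    exact mul_pos (zpow_pos h1 _) (zpow_pos h2 _)
  -- z L tends to 0
  have hz0 : Tendsto z atTop (nhds 0) := by
    have heq : ∀ᶠ L : ℝ in atTop, s ^ (a + 1 - l) * L ^ (-(a + l + 1)) = z L := by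
      filter_upwards [eventually_gt_atTop (0:ℝ)] with L hL
      have hLne : L ≠ 0 := hL.ne'
      rw [hz]
      simp only [mul_zpow]
      rw [inv_zpow, ← zpow_neg]
      rw [show a + 1 - l = -l + (a + 1) by ring, zpow_add₀ hs0.ne',
        show -(a + l + 1) = -l + -(a + 1) by ring, zpow_add₀ hLne]
      ring
    have hlim : Tendsto (fun L : ℝ => s ^ (a + 1 - l) * L ^ (-(a + l + 1))) atTop (nhds 0) := by
      simpa using tendsto_const_mul_zpow_atTop_zero (c := s ^ (a + 1 - l))
        (n := -(a + l + 1)) (𝕜 := ℝ) (by omega)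
    exact hlim.congr' heq
  -- eventually z L < min 1 κ
  have hsmall : ∀ᶠ L : ℝ in atTop, z L < min 1 κ :=
    Filter.Tendsto.eventually_lt_const (show (0:ℝ) < min 1 κ from lt_min one_pos hκ) hz0
  have hev : ∀ᶠ L : ℝ in atTop, 0 < z L ∧ z L < min 1 κ ∧ L ≠ 0 := by
    filter_upwards [eventually_gt_atTop (0:ℝ), hsmall] with L h1 h2
    exact ⟨hzpos L h1, h2, h1.ne'⟩
  -- nonvanishing of the brackets and formula for the ratio
  have hbr : ∀ L : ℝ, 0 < z L → z L < min 1 κ → L ≠ 0 →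
      brR (z L) ≠ 0 ∧ brR ((L * s) ^ (l + 1) * (L⁻¹ * s) ^ (-a)) ≠ 0 ∧
      edgeRatio κ μ c L = s * (z L - 1) / (κ - z L) := by
    intro L h0 h1 hLne
    have hz1 : z L < 1 := lt_of_lt_of_le h1 (min_le_left _ _)
    have hzκ : z L < κ := lt_of_lt_of_le h1 (min_le_right _ _)
    have harg2 : (L * s) ^ (l + 1) * (L⁻¹ * s) ^ (-a) = κ / z L := by
      rw [eq_div_iff h0.ne', mul_comm]
      exact hmul L hLne
    have hb1 : brR (z L) ≠ 0 := by
      rw [brR_eq]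
      exact div_ne_zero (by linarith) (Real.sqrt_ne_zero'.mpr h0)
    have hgt1 : 1 < κ / z L := (one_lt_div h0).mpr hzκ
    have hb2 : brR (κ / z L) ≠ 0 := by
      rw [brR_eq]
      exact div_ne_zero (by linarith) (Real.sqrt_ne_zero'.mpr (by linarith))
    refine ⟨hb1, by rwa [harg2], ?_⟩
    rw [edgeRatio]
    rw [show brR ((L * Real.sqrt κ) ^ (-(legLength μ c : ℤ)) *
          (L⁻¹ * Real.sqrt κ) ^ ((armLength μ c : ℤ) + 1)) = brR (z L) from rfl]
    rw [show ((L * Real.sqrt κ) ^ ((legLength μ c : ℤ) + 1) *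
          (L⁻¹ * Real.sqrt κ) ^ (-(armLength μ c : ℤ))) = κ / z L from harg2]
    have hsz : Real.sqrt (z L) ≠ 0 := Real.sqrt_ne_zero'.mpr h0
    have hκz : κ - z L ≠ 0 := by linarith
    have hsqz : Real.sqrt (z L) * Real.sqrt (z L) = z L := Real.mul_self_sqrt h0.le
    have hzz : (κ / z L - 1) * z L = κ - z L := by field_simp
    have hB : brR (κ / z L) = (κ - z L) / (s * Real.sqrt (z L)) := by
      rw [brR_eq, Real.sqrt_div hκ.le, div_div_eq_mul_div,
        div_eq_div_iff hs0.ne' (mul_ne_zero hs0.ne' hsz)]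
      linear_combination (κ / z L - 1) * s * hsqz + s * hzz
    rw [brR_eq, hB, div_div_div_eq, div_eq_div_iff (mul_ne_zero hsz hκz) hκz]
    ring
  constructor
  · filter_upwards [hev] with L ⟨h0, h1, hLne⟩
    obtain ⟨hb1, hb2, _⟩ := hbr L h0 h1 hLne
    exact ⟨hb1, hb2⟩
  · have hlim : Tendsto (fun L => s * (z L - 1) / (κ - z L)) atTop
        (nhds (s * (0 - 1) / (κ - 0))) := by
      apply Tendsto.div
      · exact (tendsto_const_nhds.mul (hz0.sub tendsto_const_nhds))
      · exact tendsto_const_nhds.sub hz0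
      · simpa using hκ.ne'
    have hval : s * (0 - 1) / (κ - 0) = -(s)⁻¹ := by
      rw [← hss]
      field_simp
      ring
    rw [hval] at hlim
    apply hlim.congr'
    filter_upwards [hev] with L ⟨h0, h1, hLne⟩
    exact ((hbr L h0 h1 hLne).2.2).symm

theorem stmt16 (μ : YoungDiagram) (κ : ℝ) (hκ : 0 < κ) :
    (∀ᶠ L : ℝ in atTop, ∀ c ∈ μ.cells,
      brR ((L * Real.sqrt κ) ^ (-(legLength μ c : ℤ)) *
            (L⁻¹ * Real.sqrt κ) ^ ((armLength μ c : ℤ) + 1)) ≠ 0 ∧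
      brR ((L * Real.sqrt κ) ^ ((legLength μ c : ℤ) + 1) *
            (L⁻¹ * Real.sqrt κ) ^ (-(armLength μ c : ℤ))) ≠ 0) ∧
    Filter.Tendsto
      (fun L : ℝ => ∏ c ∈ μ.cells,
        edgeRatio κ μ c L ^ ((armLength μ c : ℤ) - (legLength μ c : ℤ)))
      atTop
      (nhds ((-Real.sqrt κ) ^ ((nOf μ : ℤ) - (nOf μ.transpose : ℤ)))) ∧
    Filter.Tendsto
      (fun L : ℝ => ∏ c ∈ μ.cells,
        edgeRatio κ μ c L ^ (2 * (armLength μ c : ℤ) + 1))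
      atTop
      (nhds ((-(Real.sqrt κ)⁻¹) ^ (2 * nOf μ.transpose + μ.card))) := by
  have hs0 : 0 < Real.sqrt κ := Real.sqrt_pos.mpr hκ
  have hx : -(Real.sqrt κ)⁻¹ ≠ 0 := by
    simp [inv_ne_zero hs0.ne']
  refine ⟨?_, ?_, ?_⟩
  · rw [eventually_all_finset]
    exact fun c _ => (cell_key μ κ hκ c).1
  · have h := tendsto_finset_prod (f := fun c L => edgeRatio κ μ c L ^
        ((armLength μ c : ℤ) - (legLength μ c : ℤ))) μ.cells
      (fun c _ => ((cell_key μ κ hκ c).2).zpow₀ _ (Or.inl hx))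
    have heq : ∏ c ∈ μ.cells, (-(Real.sqrt κ)⁻¹) ^ ((armLength μ c : ℤ) - (legLength μ c : ℤ))
        = (-Real.sqrt κ) ^ ((nOf μ : ℤ) - (nOf μ.transpose : ℤ)) := by
      rw [prod_zpow_const _ _ hx]
      have hsum : ∑ c ∈ μ.cells, ((armLength μ c : ℤ) - (legLength μ c : ℤ))
          = (nOf μ.transpose : ℤ) - (nOf μ : ℤ) := by
        rw [Finset.sum_sub_distrib, ← Nat.cast_sum, ← Nat.cast_sum, sum_arm, sum_leg]
      rw [hsum, ← inv_neg, inv_zpow, ← zpow_neg, neg_sub]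
    rwa [heq] at h
  · have h := tendsto_finset_prod (f := fun c L => edgeRatio κ μ c L ^
        (2 * (armLength μ c : ℤ) + 1)) μ.cells
      (fun c _ => ((cell_key μ κ hκ c).2).zpow₀ _ (Or.inl hx))
    have heq : ∏ c ∈ μ.cells, (-(Real.sqrt κ)⁻¹) ^ (2 * (armLength μ c : ℤ) + 1)
        = (-(Real.sqrt κ)⁻¹) ^ (2 * nOf μ.transpose + μ.card) := by
      rw [prod_zpow_const _ _ hx]
      have hsum : ∑ c ∈ μ.cells, (2 * (armLength μ c : ℤ) + 1)
          = ((2 * nOf μ.transpose + μ.card : ℕ) : ℤ) := by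
        rw [Finset.sum_add_distrib, ← Finset.mul_sum, ← Nat.cast_sum, sum_arm,
          Finset.sum_const, YoungDiagram.card]
        push_cast
        ring
      rw [hsum, zpow_natCast]
    rwa [heq] at h
end
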